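/- arXiv:1511.00003 — 8 statements merged into one kernel-verified Lean document; each statement's English description precedes it below -/
import Mathlib

section
/- Let V be a regular potential, let ψ be the solution of the gradient flow dψ_t = -V'(ψ_t)dt with ψ_0 = x₀ ∈ ℝ \ {0}, and let Φ be the fundamental solution of the linearization along the flow, dΦ_t = -V''(ψ_t)Φ_t dt with Φ_0 = 1. Then lim_{t→+∞} Φ_t = 0. -/
open Filter Set Topology

/-!
Along the flow, `V'(ψ_t)` satisfies `d/dt V'(ψ_t) = -V''(ψ_t) V'(ψ_t)`, the same linear equation
as `V'(x₀) Φ_t`, so uniqueness for linear ODEs gives `Φ_t = V'(ψ_t) / V'(x₀)`. Since `V'` vanishes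
only at `0` and `V''(0) > 0`, we have `x V'(x) > 0` for `x ≠ 0`; hence `ψ_t²` strictly decreases,
at a rate bounded below as long as it stays away from `0`, so `ψ_t → 0` and
`Φ_t → V'(0) / V'(x₀) = 0`.
-/

theorem pos_mul_apply_of_hasDerivAt {g : ℝ → ℝ} {g' : ℝ} (hg : Continuous g)
    (hg0 : HasDerivAt g g' 0) (hg' : 0 < g') (hzero : ∀ x, g x = 0 ↔ x = 0)
    {x : ℝ} (hx : x ≠ 0) : 0 < x * g x := by
  have hnear : ∀ᶠ y in 𝓝[≠] 0, 0 < y * g y := by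
    filter_upwards [(hasDerivAt_iff_tendsto_slope.mp hg0).eventually (lt_mem_nhds hg'),
      self_mem_nhdsWithin] with y hslope hy
    have hy : y ≠ 0 := hy
    have : y * g y = y ^ 2 * slope g 0 y := by
      rw [slope_def_field, (hzero 0).2 rfl]; field_simp; ring
    rw [this]; positivity
  have hhalfLine : ∀ s : Set ℝ, IsPreconnected s → s ⊆ {0}ᶜ → (𝓝[s] 0).NeBot → x ∈ s →
      0 < x * g x := by
    intro s hs hs0 _ hxs
    by_contra! hneg
    obtain ⟨y, hys, hy⟩ := hs.intermediate_value₂_eventually₁ (l := 𝓝[s] 0) hxs inf_le_right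
      (continuous_id.mul hg).continuousOn continuousOn_const hneg
      ((hnear.filter_mono (nhdsWithin_mono _ hs0)).mono fun _ hy => hy.le)
    rcases mul_eq_zero.mp hy with h | h
    · exact hs0 hys h
    · exact hs0 hys ((hzero y).mp h)
  rcases hx.lt_or_gt with hx | hx
  · exact hhalfLine (Iio 0) isPreconnected_Iio (fun y hy => hy.ne) inferInstance hx
  · exact hhalfLine (Ioi 0) isPreconnected_Ioi (fun y hy => hy.ne') inferInstance hx

theorem exists_lt_of_hasDerivAt_le_neg {L L' : ℝ → ℝ} {ε c : ℝ} (hc : 0 < c)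
    (hL : ∀ t ≥ 0, HasDerivAt L (L' t) t) (hL' : ∀ t ≥ 0, ε ≤ L t → L' t ≤ -c) :
    ∃ t ≥ 0, L t < ε := by
  by_contra! hge
  have hdecay : AntitoneOn (fun t => L t + c * t) (Ici 0) := by
    refine antitoneOn_of_hasDerivWithinAt_nonpos (convex_Ici 0)
      (fun t ht => ((hL t ht).continuousAt.add (by fun_prop)).continuousWithinAt)
      (fun t ht => ((hL t (interior_subset ht)).add
        ((hasDerivAt_id t).const_mul c)).hasDerivWithinAt) fun t ht => ?_
    have ht : 0 ≤ t := interior_subset ht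
    linarith [hL' t ht (hge t ht)]
  set T := (|L 0 - ε| + 1) / c
  have hT : 0 ≤ T := by positivity
  have := hdecay self_mem_Ici hT hT
  have hcT : c * T = |L 0 - ε| + 1 := mul_div_cancel₀ _ hc.ne'
  simp only [mul_zero, add_zero, hcT] at this
  linarith [hge T hT, le_abs_self (L 0 - ε)]

section GradientFlow

variable {g ψ : ℝ → ℝ}

theorem hasDerivAt_sq_of_hasDerivAt_neg {t : ℝ} (hψ : HasDerivAt ψ (-g (ψ t)) t) :
    HasDerivAt (fun t => ψ t ^ 2) (-(2 * (ψ t * g (ψ t)))) t :=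
  (hψ.pow 2).congr_deriv (by simp only [Nat.cast_ofNat, Nat.add_one_sub_one, pow_one]; ring)

theorem sq_antitoneOn_of_hasDerivAt_neg (hg : ∀ x, 0 ≤ x * g x)
    (hψ : ∀ t ≥ 0, HasDerivAt ψ (-g (ψ t)) t) : AntitoneOn (fun t => ψ t ^ 2) (Ici 0) :=
  antitoneOn_of_hasDerivWithinAt_nonpos (convex_Ici 0)
    (fun t ht => ((hψ t ht).continuousAt.pow 2).continuousWithinAt)
    (fun t ht => (hasDerivAt_sq_of_hasDerivAt_neg (hψ t (interior_subset ht))).hasDerivWithinAt)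
    fun t _ => by linarith [hg (ψ t)]

theorem abs_le_abs_of_hasDerivAt_neg (hg : ∀ x, 0 ≤ x * g x)
    (hψ : ∀ t ≥ 0, HasDerivAt ψ (-g (ψ t)) t) {t : ℝ} (ht : 0 ≤ t) : |ψ t| ≤ |ψ 0| :=
  sq_le_sq.mp (sq_antitoneOn_of_hasDerivAt_neg hg hψ self_mem_Ici ht ht)

theorem tendsto_zero_of_hasDerivAt_neg (hg : Continuous g) (hpos : ∀ x ≠ 0, 0 < x * g x)
    (hψ : ∀ t ≥ 0, HasDerivAt ψ (-g (ψ t)) t) : Tendsto ψ atTop (𝓝 0) := by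
  have hnonneg : ∀ x, 0 ≤ x * g x := fun x =>
    (eq_or_ne x 0).elim (fun h => by simp [h]) fun h => (hpos x h).le
  have hsmall : ∀ ε > 0, ∃ t ≥ 0, ψ t ^ 2 < ε := by
    intro ε hε
    -- `ψ t` stays in this compact annulus while `ε ≤ ψ t ^ 2`, so `ψ ^ 2` decays at a
    -- rate bounded below there
    have hK : IsCompact (Icc (-|ψ 0|) |ψ 0| ∩ {x | ε ≤ x ^ 2}) :=
      isCompact_Icc.inter_right (isClosed_le continuous_const (continuous_pow 2))
    obtain ⟨c, hc, hcK⟩ := hK.exists_forall_le' (f := fun x => 2 * (x * g x)) (a := 0)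
      (by fun_prop) fun x hx => by
        have : x ≠ 0 := by rintro rfl; exact hε.not_ge (by simpa using hx.2)
        linarith [hpos x this]
    refine exists_lt_of_hasDerivAt_le_neg hc
      (fun t ht => hasDerivAt_sq_of_hasDerivAt_neg (hψ t ht)) fun t ht hεt => ?_
    have := hcK (ψ t) ⟨abs_le.mp (abs_le_abs_of_hasDerivAt_neg hnonneg hψ ht), hεt⟩
    linarith
  have hsq : Tendsto (fun t => ψ t ^ 2) atTop (𝓝 0) := by
    refine tendsto_order.2 ⟨fun a ha => Eventually.of_forall fun t => ha.trans_le (sq_nonneg _),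
      fun ε hε => ?_⟩
    obtain ⟨t₀, ht₀, hlt⟩ := hsmall ε hε
    filter_upwards [eventually_ge_atTop t₀] with t ht
    exact (sq_antitoneOn_of_hasDerivAt_neg hnonneg hψ ht₀ (ht₀.trans ht) ht).trans_lt hlt
  have habs : Tendsto (fun t => |ψ t|) atTop (𝓝 0) := by
    simpa [Real.sqrt_sq_eq_abs] using hsq.sqrt
  exact (tendsto_zero_iff_abs_tendsto_zero ψ).mpr habs

end GradientFlow

theorem eqOn_zero_of_hasDerivAt_mul_self {a y : ℝ → ℝ} {K t : ℝ}
    (ha : ∀ s ∈ Icc 0 t, |a s| ≤ K) (hy : ∀ s ∈ Icc 0 t, HasDerivAt y (a s * y s) s)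
    (hy0 : y 0 = 0) : EqOn y 0 (Icc 0 t) := by
  have hlip : ∀ s ∈ Ico 0 t, LipschitzOnWith K.toNNReal (a s * ·) univ := fun s hs =>
    ((lipschitzWith_smul (a s)).weaken (by
      rw [← NNReal.coe_le_coe, coe_nnnorm, Real.coe_toNNReal']
      exact (ha s (Ico_subset_Icc_self hs)).trans (le_max_left _ _))).lipschitzOnWith
  exact ODE_solution_unique_of_mem_Icc_right hlip
    (fun s hs => (hy s hs).continuousAt.continuousWithinAt)
    (fun s hs => (hy s (Ico_subset_Icc_self hs)).hasDerivWithinAt) (fun _ _ => mem_univ _)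
    continuousOn_const
    (fun s _ => (hasDerivWithinAt_const s (Ici s) (0 : ℝ)).congr_deriv (mul_zero _).symm)
    (fun _ _ => mem_univ _) hy0

theorem apply_flow_eq_mul_linearization {g g' ψ Φ : ℝ → ℝ} (hg : ∀ x, HasDerivAt g (g' x) x)
    (hg' : Continuous g') (hψ : ∀ t ≥ 0, HasDerivAt ψ (-g (ψ t)) t) (hΦ0 : Φ 0 = 1)
    (hΦ : ∀ t ≥ 0, HasDerivAt Φ (-g' (ψ t) * Φ t) t) {t : ℝ} (ht : 0 ≤ t) :
    g (ψ t) = g (ψ 0) * Φ t := by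
  obtain ⟨K, hK⟩ := isCompact_Icc.exists_bound_of_continuousOn <| hg'.comp_continuousOn
    fun s hs => (hψ s hs.1).continuousAt.continuousWithinAt (s := Icc 0 t)
  -- `g (ψ 0) * Φ` and `g ∘ ψ` solve the same linear equation with the same initial value
  have := eqOn_zero_of_hasDerivAt_mul_self (a := fun s => -g' (ψ s))
    (y := fun s => g (ψ 0) * Φ s - g (ψ s)) (fun s hs => by simpa using hK s hs)
    (fun s hs => (((hΦ s hs.1).const_mul _).sub ((hg (ψ s)).comp s (hψ s hs.1))).congr_deriv
      (by ring))
    (by simp [hΦ0]) ⟨ht, le_rfl⟩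
  exact (sub_eq_zero.mp this).symm

theorem fundamental_solution_tendsto_zero_general
    (V ψ Φ : ℝ → ℝ) (x₀ : ℝ)
    (hV : ContDiff ℝ 3 V)
    (hcrit : ∀ x : ℝ, deriv V x = 0 ↔ x = 0)
    (hV''0 : 0 < deriv (deriv V) 0)
    (hx₀ : x₀ ≠ 0)
    (hψ0 : ψ 0 = x₀)
    (hψ : ∀ t : ℝ, 0 ≤ t → HasDerivAt ψ (-(deriv V (ψ t))) t)
    (hΦ0 : Φ 0 = 1)
    (hΦ : ∀ t : ℝ, 0 ≤ t → HasDerivAt Φ (-(deriv (deriv V) (ψ t)) * Φ t) t) :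
    Tendsto Φ atTop (nhds 0) := by
  have hV' : ContDiff ℝ 2 (deriv V) := hV.deriv'
  have hV'cont : Continuous (deriv V) := hV.continuous_deriv (by norm_num)
  have hV'' : ∀ x, HasDerivAt (deriv V) (deriv (deriv V) x) x := fun x =>
    (hV'.differentiable (by norm_num) x).hasDerivAt
  have hsign : ∀ x ≠ 0, 0 < x * deriv V x := fun x =>
    pos_mul_apply_of_hasDerivAt hV'cont (hV'' 0) hV''0 hcrit
  have hψlim : Tendsto ψ atTop (𝓝 0) := tendsto_zero_of_hasDerivAt_neg hV'cont hsign hψ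
  have hΦψ : ∀ t ≥ 0, deriv V (ψ t) = deriv V x₀ * Φ t := fun t ht =>
    hψ0 ▸ apply_flow_eq_mul_linearization hV'' (hV'.continuous_deriv (by norm_num)) hψ hΦ0 hΦ ht
  have hlim : Tendsto (fun t => deriv V (ψ t) / deriv V x₀) atTop (𝓝 0) := by
    simpa [(hcrit 0).2 rfl] using ((hV'cont.tendsto 0).comp hψlim).div_const (deriv V x₀)
  refine hlim.congr' ?_
  filter_upwards [eventually_ge_atTop 0] with t ht
  rw [hΦψ t ht, mul_div_cancel_left₀ _ ((hcrit x₀).not.mpr hx₀)]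

/-- For a regular potential `V`, the fundamental solution `Φ` of the
linearization along the gradient flow `ψ` tends to `0` as `t → +∞`. -/
theorem fundamental_solution_tendsto_zero
    (V ψ Φ : ℝ → ℝ) (x₀ : ℝ)
    (hV : ContDiff ℝ 3 V)
    (hV0 : V 0 = 0)
    (hcrit : ∀ x : ℝ, deriv V x = 0 ↔ x = 0)
    (hV''0 : 0 < deriv (deriv V) 0)
    (hcoercive : Tendsto V (Filter.cocompact ℝ) atTop)
    (hx₀ : x₀ ≠ 0)
    (hψ0 : ψ 0 = x₀)
    (hψ : ∀ t : ℝ, 0 ≤ t → HasDerivAt ψ (-(deriv V (ψ t))) t)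
    (hΦ0 : Φ 0 = 1)
    (hΦ : ∀ t : ℝ, 0 ≤ t → HasDerivAt Φ (-(deriv (deriv V) (ψ t)) * Φ t) t) :
    Tendsto Φ atTop (nhds 0) :=
  fundamental_solution_tendsto_zero_general V ψ Φ x₀ hV hcrit hV''0 hx₀ hψ0 hψ hΦ0 hΦ
end

section
/- Let V be a regular potential, let ψ be the solution of the gradient flow dψ_t = -V'(ψ_t)dt with ψ_0 = x₀ ∈ ℝ \ {0}, and let Φ be the fundamental solution of dΦ_t = -V''(ψ_t)Φ_t dt with Φ_0 = 1. Then there exists a constant c ≠ 0 such that lim_{t→+∞} e^{V''(0)t} Φ_t = c. -/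
/-!
The difference quotient `V'(x) / x` extends continuously by `V''(0)` at `0`; it never vanishes,
so by connectedness it is positive, and on the bounded range `|x| ≤ |ψ 0|` of the flow it is at
least some `b > 0`. Hence `x V'(x) ≥ b x²` along the flow and `|ψ t| ≤ e^{-bt} |ψ 0|`.
Then `k t := V''(0) - V''(ψ t) = O(ψ t)` is integrable on `(0, ∞)`, and `W t := e^{V''(0) t} Φ t`
solves `W' = k W`, so `W t = exp (∫₀ᵗ k) → exp (∫₀^∞ k) ≠ 0`.
-/

open Filter Set MeasureTheory Asymptotics Real Topology

lemma pos_of_continuous_of_ne_zero {q : ℝ → ℝ} (hq : Continuous q) (hne : ∀ x, q x ≠ 0)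
    {x₀ : ℝ} (h₀ : 0 < q x₀) (x : ℝ) : 0 < q x := by
  by_contra! hx
  obtain ⟨z, -, hz⟩ := intermediate_value_uIcc hq.continuousOn
    (show (0 : ℝ) ∈ uIcc (q x₀) (q x) from mem_uIcc.mpr (Or.inr ⟨hx, h₀.le⟩))
  exact hne z hz

lemma mul_eq_sq_mul_dslope {f : ℝ → ℝ} (hf0 : f 0 = 0) (x : ℝ) :
    x * f x = x ^ 2 * dslope f 0 x := by
  have := sub_smul_dslope f 0 x
  rw [hf0, sub_zero, sub_zero, smul_eq_mul] at this
  rw [← this]; ring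

lemma continuous_dslope_of_differentiableAt {f : ℝ → ℝ} {a : ℝ} (hf : Continuous f)
    (hd : DifferentiableAt ℝ f a) : Continuous (dslope f a) :=
  continuousOn_univ.mp ((continuousOn_dslope univ_mem).mpr ⟨hf.continuousOn, hd⟩)

lemma abs_le_exp_mul_abs_of_hasDerivAt {f ψ : ℝ → ℝ} {b : ℝ}
    (hψ : ∀ t, 0 ≤ t → HasDerivAt ψ (-f (ψ t)) t)
    (hb : ∀ t, 0 ≤ t → b * ψ t ^ 2 ≤ ψ t * f (ψ t)) {t : ℝ} (ht : 0 ≤ t) :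
    |ψ t| ≤ exp (-(b * t)) * |ψ 0| := by
  have hderiv : ∀ s, 0 ≤ s → HasDerivAt (fun s => exp (2 * b * s) * ψ s ^ 2)
      (2 * exp (2 * b * s) * (b * ψ s ^ 2 - ψ s * f (ψ s))) s := fun s hs => by
    refine (((hasDerivAt_id' s).const_mul (2 * b)).exp.mul ((hψ s hs).pow 2)).congr_deriv ?_
    simp only [Pi.pow_apply]; ring
  have hanti : AntitoneOn (fun s => exp (2 * b * s) * ψ s ^ 2) (Ici 0) := by
    refine antitoneOn_of_hasDerivWithinAt_nonpos (convex_Ici 0)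
      (fun s hs => (hderiv s hs).continuousAt.continuousWithinAt)
      (fun s hs => (hderiv s (interior_subset hs)).hasDerivWithinAt) fun s hs =>
      mul_nonpos_of_nonneg_of_nonpos (by positivity) (by linarith [hb s (interior_subset hs)])
  have hsq : ψ t ^ 2 ≤ (exp (-(b * t)) * |ψ 0|) ^ 2 := by
    have hmono := hanti self_mem_Ici ht ht
    simp only [mul_zero, exp_zero, one_mul] at hmono
    calc ψ t ^ 2 = exp (-(b * t)) ^ 2 * (exp (2 * b * t) * ψ t ^ 2) := by
          rw [← exp_nat_mul, ← mul_assoc, ← exp_add]; ring_nf; simp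
      _ ≤ exp (-(b * t)) ^ 2 * ψ 0 ^ 2 := by gcongr
      _ = (exp (-(b * t)) * |ψ 0|) ^ 2 := by rw [mul_pow, sq_abs]
  exact abs_le_of_sq_le_sq hsq (by positivity)

section SignCondition

variable {f : ℝ → ℝ} (hf : Continuous f) (hzero : ∀ x, f x = 0 ↔ x = 0)
  (hd : DifferentiableAt ℝ f 0) (hpos : 0 < deriv f 0)
include hf hzero hd hpos

lemma dslope_pos_of_eq_zero_iff (x : ℝ) : 0 < dslope f 0 x := by
  refine pos_of_continuous_of_ne_zero (continuous_dslope_of_differentiableAt hf hd)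
    (fun y => ?_) (x₀ := 0) (by rwa [dslope_same]) x
  rcases eq_or_ne y 0 with rfl | hy
  · rw [dslope_same]; exact hpos.ne'
  · rw [dslope_of_ne _ hy, slope_def_field, sub_zero]
    exact div_ne_zero (by rw [(hzero 0).mpr rfl, sub_zero]; exact (hzero y).not.mpr hy) hy

lemma mul_nonneg_of_eq_zero_iff (x : ℝ) : 0 ≤ x * f x := by
  rw [mul_eq_sq_mul_dslope ((hzero 0).mpr rfl)]
  exact mul_nonneg (sq_nonneg x) (dslope_pos_of_eq_zero_iff hf hzero hd hpos x).le

lemma exists_pos_mul_sq_le_mul (M : ℝ) : ∃ b > 0, ∀ x, |x| ≤ M → b * x ^ 2 ≤ x * f x := by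
  obtain ⟨b, hb, hbq⟩ := (isCompact_Icc (a := -M) (b := M)).exists_forall_le'
    (continuous_dslope_of_differentiableAt hf hd).continuousOn
    (fun x _ => dslope_pos_of_eq_zero_iff hf hzero hd hpos x)
  refine ⟨b, hb, fun x hx => ?_⟩
  rw [mul_eq_sq_mul_dslope ((hzero 0).mpr rfl), mul_comm (x ^ 2)]
  exact mul_le_mul_of_nonneg_right (hbq x (abs_le.mp hx)) (sq_nonneg x)

lemma exists_isBigO_exp_neg_of_hasDerivAt {ψ : ℝ → ℝ}
    (hψ : ∀ t, 0 ≤ t → HasDerivAt ψ (-f (ψ t)) t) :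
    ∃ b > 0, ψ =O[atTop] fun t => exp (-b * t) := by
  have hψ_bounded : ∀ t, 0 ≤ t → |ψ t| ≤ |ψ 0| := fun t ht => by
    simpa using abs_le_exp_mul_abs_of_hasDerivAt (b := 0) hψ
      (fun s _ => by simpa using mul_nonneg_of_eq_zero_iff hf hzero hd hpos (ψ s)) ht
  obtain ⟨b, hb, hbf⟩ := exists_pos_mul_sq_le_mul hf hzero hd hpos |ψ 0|
  refine ⟨b, hb, IsBigO.of_bound |ψ 0| ?_⟩
  filter_upwards [eventually_ge_atTop 0] with t ht
  simpa [mul_comm, abs_exp] using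
    abs_le_exp_mul_abs_of_hasDerivAt hψ (fun s hs => hbf _ (hψ_bounded s hs)) ht

end SignCondition

lemma eq_mul_exp_integral_of_hasDerivAt {k W : ℝ → ℝ} (hk : ContinuousOn k (Ici 0))
    (hW : ∀ t, 0 ≤ t → HasDerivAt W (k t * W t) t) {t : ℝ} (ht : 0 ≤ t) :
    W t = W 0 * exp (∫ s in (0)..t, k s) := by
  -- `k` is only continuous on `Ici 0`; extended constantly to the left it has a primitive
  -- that is differentiable everywhere.
  set k' : ℝ → ℝ := fun s => k (max s 0)
  have hk' : Continuous k' :=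
    hk.comp_continuous (continuous_id.max continuous_const) fun s => le_max_right s 0
  set K : ℝ → ℝ := fun s => ∫ r in (0)..s, k' r
  have hF : ∀ s, 0 ≤ s → HasDerivAt (fun s => W s * exp (-K s)) 0 s := fun s hs => by
    have hK : HasDerivAt K (k' s) s := (hk'.integral_hasStrictDerivAt 0 s).hasDerivAt
    refine ((hW s hs).mul hK.neg.exp).congr_deriv ?_
    simp only [k', max_eq_left hs]; ring
  have hconst := constant_of_has_deriv_right_zero
    (fun s hs => (hF s hs.1).continuousAt.continuousWithinAt)
    (fun s hs => (hF s hs.1).hasDerivWithinAt) t ⟨ht, le_rfl⟩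
  have hK0 : K 0 = 0 := intervalIntegral.integral_same
  have hKt : K t = ∫ s in (0)..t, k s :=
    intervalIntegral.integral_congr fun s hs => by
      rw [uIcc_of_le ht] at hs
      simp only [k', max_eq_left hs.1]
  rw [hK0, neg_zero, exp_zero, mul_one, hKt] at hconst
  rw [← hconst, mul_assoc, ← exp_add, neg_add_cancel, exp_zero, mul_one]

lemma tendsto_of_hasDerivAt_eq_mul {k W : ℝ → ℝ} (hk : ContinuousOn k (Ici 0))
    (hki : IntegrableOn k (Ioi 0)) (hW : ∀ t, 0 ≤ t → HasDerivAt W (k t * W t) t) :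
    Tendsto W atTop (𝓝 (W 0 * exp (∫ s in Ioi 0, k s))) := by
  have hlim := ((continuous_exp.tendsto _).comp
    (intervalIntegral_tendsto_integral_Ioi 0 hki tendsto_id)).const_mul (W 0)
  refine hlim.congr' ?_
  filter_upwards [eventually_ge_atTop 0] with t ht
  exact (eq_mul_exp_integral_of_hasDerivAt hk hW ht).symm

lemma HasDerivAt.isBigO_comp_sub {α : Type*} {l : Filter α} {g : ℝ → ℝ} {g' : ℝ}
    (hg : HasDerivAt g g' 0) {ψ φ : α → ℝ} (hψ : ψ =O[l] φ) (hφ : Tendsto φ l (𝓝 0)) :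
    (fun t => g (ψ t) - g 0) =O[l] φ := by
  have h := hg.isBigO_sub.comp_tendsto (hψ.trans_tendsto hφ)
  simp only [Function.comp_def, sub_zero] at h
  exact h.trans hψ

theorem exp_mul_fundamental_solution_tendsto_const_general
    (V ψ Φ : ℝ → ℝ)
    (hV : ContDiff ℝ 3 V)
    (hcrit : ∀ x : ℝ, deriv V x = 0 ↔ x = 0)
    (hV''0 : 0 < deriv (deriv V) 0)
    (hψ : ∀ t : ℝ, 0 ≤ t → HasDerivAt ψ (-(deriv V (ψ t))) t)
    (hΦ0 : Φ 0 = 1)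
    (hΦ : ∀ t : ℝ, 0 ≤ t → HasDerivAt Φ (-(deriv (deriv V) (ψ t)) * Φ t) t) :
    ∃ c : ℝ, c ≠ 0 ∧
      Tendsto (fun t : ℝ => Real.exp (deriv (deriv V) 0 * t) * Φ t) atTop (nhds c) := by
  have hV' : ContDiff ℝ 2 (deriv V) := hV.deriv'
  have hV'' : ContDiff ℝ 1 (deriv (deriv V)) := hV'.deriv'
  obtain ⟨b, hb, hψ_decay⟩ := exists_isBigO_exp_neg_of_hasDerivAt hV'.continuous hcrit
    (hV'.differentiable two_ne_zero 0) hV''0 hψ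
  set k : ℝ → ℝ := fun t => deriv (deriv V) 0 - deriv (deriv V) (ψ t)
  have hk_cont : ContinuousOn k (Ici 0) :=
    continuousOn_const.sub (hV''.continuous.comp_continuousOn
      fun t ht => (hψ t ht).continuousAt.continuousWithinAt)
  have hk_decay : k =O[atTop] fun t => exp (-b * t) := by
    have hexp : Tendsto (fun t => exp (-b * t)) atTop (𝓝 0) :=
      tendsto_exp_atBot.comp (tendsto_id.const_mul_atTop_of_neg (neg_neg_of_pos hb))
    simpa [k] using ((hV''.differentiable one_ne_zero 0).hasDerivAt.isBigO_comp_sub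
      hψ_decay hexp).neg_left
  have hW : ∀ t, 0 ≤ t → HasDerivAt (fun t => exp (deriv (deriv V) 0 * t) * Φ t)
      (k t * (exp (deriv (deriv V) 0 * t) * Φ t)) t := fun t ht => by
    refine (((hasDerivAt_id' t).const_mul _).exp.mul (hΦ t ht)).congr_deriv ?_
    simp only [k]; ring
  refine ⟨exp (∫ s in Ioi 0, k s), exp_ne_zero _, ?_⟩
  simpa [hΦ0] using
    tendsto_of_hasDerivAt_eq_mul hk_cont (integrable_of_isBigO_exp_neg hb hk_cont hk_decay) hW

/-- For a regular potential `V`, the fundamental solution `Φ` of the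
linearization along the gradient flow `ψ` satisfies `e^{V''(0) t} Φ t → c` as
`t → +∞` for some constant `c ≠ 0`. -/
theorem exp_mul_fundamental_solution_tendsto_const
    (V ψ Φ : ℝ → ℝ) (x₀ : ℝ)
    (hV : ContDiff ℝ 3 V)
    (hV0 : V 0 = 0)
    (hcrit : ∀ x : ℝ, deriv V x = 0 ↔ x = 0)
    (hV''0 : 0 < deriv (deriv V) 0)
    (hcoercive : Tendsto V (Filter.cocompact ℝ) atTop)
    (hx₀ : x₀ ≠ 0)
    (hψ0 : ψ 0 = x₀)
    (hψ : ∀ t : ℝ, 0 ≤ t → HasDerivAt ψ (-(deriv V (ψ t))) t)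
    (hΦ0 : Φ 0 = 1)
    (hΦ : ∀ t : ℝ, 0 ≤ t → HasDerivAt Φ (-(deriv (deriv V) (ψ t)) * Φ t) t) :
    ∃ c : ℝ, c ≠ 0 ∧
      Tendsto (fun t : ℝ => Real.exp (deriv (deriv V) 0 * t) * Φ t) atTop (nhds c) :=
  exp_mul_fundamental_solution_tendsto_const_general V ψ Φ hV hcrit hV''0 hψ hΦ0 hΦ
end

section
/- Let V be a regular potential, let ψ be the solution of the gradient flow dψ_t = -V'(ψ_t)dt with ψ_0 = x₀ ∈ ℝ \ {0}, and let Φ be the fundamental solution of dΦ_t = -V''(ψ_t)Φ_t dt with Φ_0 = 1. Then lim_{t→+∞} Φ_t² ∫₀ᵗ (1/Φ_s)² ds = 1/(2V''(0)). -/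
/-!
Since `x V'(x) > 0` for `x ≠ 0`, the coercive potential `V` has its strict global minimum at `0`,
and `V ∘ ψ` is a Lyapunov function of the gradient flow: `(V ∘ ψ)' = -V'(ψ)²`. Hence `ψ t → 0`
and `V''(ψ t) → V''(0)`. With `A t = ∫₀ᵗ V''(ψ s) ds` the linear equation gives `Φ t = exp (-A t)`,
so the quantity in question is the `∞ / ∞` quotient `(∫₀ᵗ exp (2 A s) ds) / exp (2 A t)`, whose
ratio of derivatives is `1 / (2 V''(ψ t)) → 1 / (2 V''(0))`; L'Hôpital's rule concludes.
-/

open Filter Set Topology Real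

theorem pos_of_eq_zero_iff_of_deriv_pos {g : ℝ → ℝ} (hg : Continuous g)
    (hzero : ∀ x, g x = 0 ↔ x = 0) (hg' : 0 < deriv g 0) {x : ℝ} (hx : 0 < x) : 0 < g x := by
  have hslope : Tendsto (slope g 0) (𝓝[>] 0) (𝓝 (deriv g 0)) :=
    (differentiableAt_of_deriv_ne_zero hg'.ne').hasDerivAt.tendsto_slope.mono_left
      (nhdsGT_le_nhdsNE 0)
  obtain ⟨y, hy_slope, hy, hyx⟩ : ∃ y, 0 < slope g 0 y ∧ y ∈ Ioo 0 x :=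
    ((hslope.eventually (lt_mem_nhds hg')).and (Ioo_mem_nhdsGT hx)).exists
  have hgy : 0 < g y := by
    simpa [slope_def_field, (hzero 0).2 rfl, div_pos_iff_of_pos_right hy] using hy_slope
  by_contra! hgx
  obtain ⟨z, hz, hgz⟩ := intermediate_value_Icc' hyx.le hg.continuousOn ⟨hgx, hgy.le⟩
  linarith [hz.1, (hzero z).1 hgz]

theorem mul_pos_of_eq_zero_iff_of_deriv_pos {g : ℝ → ℝ} (hg : Continuous g)
    (hzero : ∀ x, g x = 0 ↔ x = 0) (hg' : 0 < deriv g 0) {x : ℝ} (hx : x ≠ 0) :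
    0 < x * g x := by
  rcases hx.lt_or_gt with hx | hx
  · have hrefl := pos_of_eq_zero_iff_of_deriv_pos (g := fun y => -g (-y))
      (hg.comp continuous_neg).neg (fun y => by simpa using hzero (-y))
      (by simpa [deriv_comp_neg] using hg') (neg_pos.2 hx)
    nlinarith [neg_neg x ▸ hrefl]
  · exact mul_pos hx (pos_of_eq_zero_iff_of_deriv_pos hg hzero hg' hx)

theorem apply_zero_lt_of_mul_deriv_pos {V : ℝ → ℝ} (hV : Continuous V)
    (hsign : ∀ x ≠ 0, 0 < x * deriv V x) {x : ℝ} (hx : x ≠ 0) : V 0 < V x := by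
  rcases hx.lt_or_gt with hx | hx
  · refine strictAntiOn_of_deriv_neg (convex_Iic 0) hV.continuousOn (fun y hy => ?_)
      hx.le self_mem_Iic hx
    rw [interior_Iic] at hy
    exact neg_of_mul_pos_right (hsign y hy.ne) hy.le
  · refine strictMonoOn_of_deriv_pos (convex_Ici 0) hV.continuousOn (fun y hy => ?_)
      self_mem_Ici hx.le hx
    rw [interior_Ici] at hy
    exact pos_of_mul_pos_right (hsign y hy.ne') hy.le

theorem IsClosed.isCompact_of_tendsto_cocompact {X : Type*} [TopologicalSpace X] {V : X → ℝ}
    (hV : Tendsto V (cocompact X) atTop) {s : Set X} (hs : IsClosed s) {c : ℝ}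
    (hsc : ∀ x ∈ s, V x ≤ c) : IsCompact s := by
  obtain ⟨K, hK, hKc⟩ :=
    hasBasis_cocompact.eventually_iff.mp (hV.eventually (eventually_gt_atTop c))
  exact hK.of_isClosed_subset hs fun x hx => by_contra fun hxK => (hKc hxK).not_ge (hsc x hx)

theorem tendsto_nhds_of_tendsto_comp_of_strictMin {X α : Type*} [TopologicalSpace X]
    {V : X → ℝ} (hV : Continuous V) (hVc : Tendsto V (cocompact X) atTop) {x₀ : X}
    (hmin : ∀ x ≠ x₀, V x₀ < V x) {l : Filter α} {u : α → X}
    (hu : Tendsto (V ∘ u) l (𝓝 (V x₀))) : Tendsto u l (𝓝 x₀) := by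
  intro U hU
  set K := (interior U)ᶜ ∩ {x | V x ≤ V x₀ + 1}
  have hK : IsCompact K := (isOpen_interior.isClosed_compl.inter
    (isClosed_le hV continuous_const)).isCompact_of_tendsto_cocompact hVc fun x hx => hx.2
  obtain ⟨m, hm, hmK⟩ := hK.exists_forall_le' hV.continuousOn fun x hx =>
    hmin x fun h => hx.1 (h ▸ mem_interior_iff_mem_nhds.2 hU)
  refine mem_map.2 ?_
  filter_upwards [hu.eventually (gt_mem_nhds (lt_min hm (lt_add_one (V x₀))))] with t ht
  by_contra hU'
  change u t ∉ U at hU'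
  exact (hmK (u t) ⟨fun h => hU' (interior_subset h), (ht.trans_le (min_le_right _ _)).le⟩).not_gt
    (ht.trans_le (min_le_left _ _))

theorem tendsto_comp_of_hasDerivAt_eq_neg_deriv {V ψ : ℝ → ℝ} (hV : ContDiff ℝ 1 V)
    (hVc : Tendsto V (cocompact ℝ) atTop) (hmin : ∀ x, V 0 ≤ V x)
    (hcrit : ∀ x, deriv V x = 0 → x = 0)
    (hψ : ∀ t, 0 ≤ t → HasDerivAt ψ (-deriv V (ψ t)) t) :
    Tendsto (V ∘ ψ) atTop (𝓝 (V 0)) := by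
  set W := V ∘ ψ
  have hW : ∀ t, 0 ≤ t → HasDerivAt W (-deriv V (ψ t) ^ 2) t := fun t ht => by
    simpa [W, sq] using ((hV.differentiable one_ne_zero) (ψ t)).hasDerivAt.comp t (hψ t ht)
  have hWc : ContinuousOn W (Ici 0) := fun t ht => (hW t ht).continuousAt.continuousWithinAt
  have hWd : DifferentiableOn ℝ W (interior (Ici 0)) := fun t ht =>
    (hW t (interior_subset ht)).differentiableAt.differentiableWithinAt
  have hW_anti : AntitoneOn W (Ici 0) :=
    antitoneOn_of_deriv_nonpos (convex_Ici 0) hWc hWd fun t ht => by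
      rw [(hW t (interior_subset ht)).deriv]
      exact neg_nonpos.2 (sq_nonneg _)
  -- If `W ≥ m > V 0` forever, `ψ` stays in a compact set free of critical points, where
  -- `W' = -(V' ∘ ψ)²` is bounded away from zero, so `W` would decrease without bound.
  have hW_small : ∀ m, V 0 < m → ∃ t, 0 ≤ t ∧ W t < m := by
    intro m hm
    by_contra! hW_ge
    set K := {x | m ≤ V x ∧ V x ≤ W 0}
    have hK : IsCompact K := ((isClosed_le continuous_const hV.continuous).inter
      (isClosed_le hV.continuous continuous_const)).isCompact_of_tendsto_cocompact hVc
      fun x hx => hx.2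
    obtain ⟨c, hc, hcK⟩ := hK.exists_forall_le' (f := fun x => deriv V x ^ 2)
      ((hV.continuous_deriv le_rfl).pow 2).continuousOn
      fun x hx => by
        have : deriv V x ≠ 0 := fun h => (hcrit x h ▸ hx.1).not_gt hm
        positivity
    have hdecay := (convex_Ici 0).image_sub_le_mul_sub_of_deriv_le hWc hWd (C := -c)
      (fun t ht => by
        have ht' := interior_subset ht
        rw [(hW t ht').deriv]
        linarith [hcK (ψ t) ⟨hW_ge t ht', hW_anti self_mem_Ici ht' ht'⟩])
    set T := (W 0 - m) / c + 1
    have hT : 0 ≤ T := by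
      have := div_nonneg (sub_nonneg.2 (hW_ge 0 le_rfl)) hc.le
      linarith
    have hcT : -c * T = m - W 0 - c := by simp only [T]; field_simp; ring
    linarith [hdecay 0 self_mem_Ici T hT hT, hW_ge T hT]
  rw [tendsto_order]
  refine ⟨fun b hb => Eventually.of_forall fun t => hb.trans_le (hmin _), fun m hm => ?_⟩
  obtain ⟨t₀, ht₀, hlt⟩ := hW_small m hm
  filter_upwards [eventually_ge_atTop t₀] with t ht
  exact (hW_anti ht₀ (ht₀.trans ht) ht).trans_lt hlt

theorem eq_mul_exp_neg_integral_of_hasDerivAt {k Φ : ℝ → ℝ} (hk : Continuous k)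
    (hΦ : ∀ t, 0 ≤ t → HasDerivAt Φ (-k t * Φ t) t) {t : ℝ} (ht : 0 ≤ t) :
    Φ t = Φ 0 * exp (-∫ s in (0 : ℝ)..t, k s) := by
  set A := fun t => ∫ s in (0 : ℝ)..t, k s
  have hA : ∀ s, HasDerivAt A (k s) s := fun s => (hk.integral_hasStrictDerivAt 0 s).hasDerivAt
  have hu : ∀ s, 0 ≤ s → HasDerivAt (fun s => Φ s * exp (A s)) 0 s := fun s hs =>
    ((hΦ s hs).mul (hA s).exp).congr_deriv (by ring)
  have hconst := constant_of_has_deriv_right_zero (a := 0) (b := t)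
    (fun s hs => (hu s hs.1).continuousAt.continuousWithinAt)
    (fun s hs => (hu s hs.1).hasDerivWithinAt) t ⟨ht, le_rfl⟩
  simp only [A, intervalIntegral.integral_same, exp_zero, mul_one] at hconst
  rw [exp_neg, ← hconst, mul_inv_cancel_right₀ (exp_pos _).ne']

theorem tendsto_atTop_of_hasDerivAt_of_tendsto_pos {A k : ℝ → ℝ} {a : ℝ} (ha : 0 < a)
    (hA : ∀ t, HasDerivAt A (k t) t) (hk : Tendsto k atTop (𝓝 a)) : Tendsto A atTop atTop := by
  obtain ⟨T, hT⟩ := eventually_atTop.mp (hk.eventually (lt_mem_nhds (half_lt_self ha)))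
  have hgrowth := (convex_Ici T).mul_sub_le_image_sub_of_le_deriv
    (fun t _ => (hA t).continuousAt.continuousWithinAt)
    (fun t _ => (hA t).differentiableAt.differentiableWithinAt) (C := a / 2)
    (fun t ht => by rw [(hA t).deriv]; exact (hT t (interior_subset ht)).le)
  refine tendsto_atTop_mono' atTop (f₁ := fun t => A T + a / 2 * (t - T))
    ((eventually_ge_atTop T).mono fun t ht => by linarith [hgrowth T self_mem_Ici t ht ht]) ?_
  exact tendsto_atTop_add_const_left _ _
    ((tendsto_id.atTop_add tendsto_const_nhds).const_mul_atTop (half_pos ha))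

theorem lhopital_atTop_of_tendsto_atTop {f g f' g' : ℝ → ℝ} {l : ℝ}
    (hff' : ∀ᶠ x in atTop, HasDerivAt f (f' x) x) (hgg' : ∀ᶠ x in atTop, HasDerivAt g (g' x) x)
    (hg' : ∀ᶠ x in atTop, g' x ≠ 0) (hg : Tendsto g atTop atTop)
    (hdiv : Tendsto (fun x => f' x / g' x) atTop (𝓝 l)) :
    Tendsto (fun x => f x / g x) atTop (𝓝 l) := by
  rw [Metric.tendsto_atTop]
  intro ε hε
  obtain ⟨T, hT⟩ := eventually_atTop.mp
    (hff'.and (hgg'.and (hg'.and (hdiv.eventually (Metric.ball_mem_nhds l (half_pos hε))))))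
  have hcauchy : ∀ t, T < t → |f t - f T - l * (g t - g T)| ≤ ε / 2 * |g t - g T| := by
    intro t hTt
    obtain ⟨c, hc, hc_eq⟩ := exists_ratio_hasDerivAt_eq_ratio_slope f f' hTt
      (fun x hx => (hT x hx.1).1.continuousAt.continuousWithinAt) (fun x hx => (hT x hx.1.le).1)
      g g' (fun x hx => (hT x hx.1).2.1.continuousAt.continuousWithinAt)
      (fun x hx => (hT x hx.1.le).2.1)
    obtain ⟨-, -, hg'c, hdc⟩ := hT c hc.1.le
    have hsplit : f t - f T - l * (g t - g T) = (g t - g T) * (f' c / g' c - l) := by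
      field_simp
      linear_combination -hc_eq
    rw [hsplit, abs_mul, mul_comm]
    exact mul_le_mul_of_nonneg_right (Real.dist_eq _ _ ▸ hdc).le (abs_nonneg _)
  set C := |f T - l * g T| + ε / 2 * |g T|
  obtain ⟨N, hN⟩ := eventually_atTop.mp (hg.eventually (eventually_gt_atTop (2 * C / ε)))
  refine ⟨max N (T + 1), fun t ht => ?_⟩
  have hTt : T < t := by linarith [le_max_right N (T + 1)]
  have hCg : 2 * C / ε < g t := hN t (le_of_max_le_left ht)
  have hgt : 0 < g t := lt_of_le_of_lt (by positivity) hCg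
  rw [div_lt_iff₀ hε] at hCg
  rw [Real.dist_eq, div_sub' hgt.ne', abs_div, abs_of_pos hgt, div_lt_iff₀ hgt]
  calc |f t - g t * l| = |(f T - l * g T) + (f t - f T - l * (g t - g T))| := by ring_nf
    _ ≤ |f T - l * g T| + ε / 2 * |g t - g T| := by
      linarith [abs_add_le (f T - l * g T) (f t - f T - l * (g t - g T)), hcauchy t hTt]
    _ ≤ C + ε / 2 * g t := by
      have := mul_le_mul_of_nonneg_left (abs_sub (g t) (g T)) (half_pos hε).le
      rw [abs_of_pos hgt] at this
      simp only [C]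
      linarith
    _ < ε * g t := by linarith

theorem tendsto_integral_exp_div_exp {A k : ℝ → ℝ} {a : ℝ} (ha : 0 < a)
    (hA : ∀ t, HasDerivAt A (k t) t) (hk : Tendsto k atTop (𝓝 a)) :
    Tendsto (fun t => (∫ s in (0 : ℝ)..t, exp (A s)) / exp (A t)) atTop (𝓝 a⁻¹) := by
  have hAc : Continuous A := continuous_iff_continuousAt.2 fun t => (hA t).continuousAt
  refine lhopital_atTop_of_tendsto_atTop (f' := fun t => exp (A t))
    (g' := fun t => exp (A t) * k t)
    (Eventually.of_forall fun t =>
      ((continuous_exp.comp hAc).integral_hasStrictDerivAt 0 t).hasDerivAt)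
    (Eventually.of_forall fun t => (hA t).exp)
    ((hk.eventually (eventually_gt_nhds ha)).mono fun t hkt => (mul_pos (exp_pos _) hkt).ne')
    (tendsto_exp_atTop.comp (tendsto_atTop_of_hasDerivAt_of_tendsto_pos ha hA hk))
    ((hk.inv₀ ha.ne').congr fun t => ?_)
  rw [div_mul_cancel_left₀ (exp_pos _).ne']

theorem variance_normalization_tendsto_general
    (V ψ Φ : ℝ → ℝ)
    (hV : ContDiff ℝ 3 V)
    (hcrit : ∀ x : ℝ, deriv V x = 0 ↔ x = 0)
    (hV''0 : 0 < deriv (deriv V) 0)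
    (hcoercive : Tendsto V (Filter.cocompact ℝ) atTop)
    (hψ : ∀ t : ℝ, 0 ≤ t → HasDerivAt ψ (-(deriv V (ψ t))) t)
    (hΦ0 : Φ 0 = 1)
    (hΦ : ∀ t : ℝ, 0 ≤ t → HasDerivAt Φ (-(deriv (deriv V) (ψ t)) * Φ t) t) :
    Tendsto (fun t : ℝ => (Φ t) ^ 2 * ∫ s in (0:ℝ)..t, (1 / Φ s) ^ 2) atTop
      (nhds (1 / (2 * deriv (deriv V) 0))) := by
  have hV' : ContDiff ℝ 2 (deriv V) := hV.deriv' (n := 2)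
  have hV'' : Continuous (deriv (deriv V)) := hV'.continuous_deriv (by norm_num)
  have hmin : ∀ x ≠ 0, V 0 < V x := fun x hx => apply_zero_lt_of_mul_deriv_pos hV.continuous
    (fun y hy => mul_pos_of_eq_zero_iff_of_deriv_pos hV'.continuous hcrit hV''0 hy) hx
  have hψ_lim : Tendsto ψ atTop (𝓝 0) :=
    tendsto_nhds_of_tendsto_comp_of_strictMin hV.continuous hcoercive hmin
      (tendsto_comp_of_hasDerivAt_eq_neg_deriv (hV.of_le (by norm_num)) hcoercive
        (fun x => (eq_or_ne x 0).elim (fun h => h ▸ le_rfl) fun h => (hmin x h).le)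
        (fun x => (hcrit x).1) hψ)
  -- freezing `ψ` at `ψ 0` for `t < 0` makes the coefficient continuous on all of `ℝ`
  set k := fun t => deriv (deriv V) (ψ (max t 0))
  have hk : Continuous k := hV''.comp (ContinuousOn.comp_continuous
    (fun t ht => (hψ t ht).continuousAt.continuousWithinAt) (continuous_id.max continuous_const)
    fun t => le_max_right t 0)
  have hk_lim : Tendsto k atTop (𝓝 (deriv (deriv V) 0)) :=
    (hV''.tendsto 0).comp (hψ_lim.comp (tendsto_atTop_mono (fun t => le_max_left t 0) tendsto_id))
  have hΦ_exp : ∀ t, 0 ≤ t → Φ t = exp (-∫ s in (0 : ℝ)..t, k s) := fun t ht => by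
    rw [eq_mul_exp_neg_integral_of_hasDerivAt (Φ := Φ) hk
      (fun s hs => by simpa [k, max_eq_left hs] using hΦ s hs) ht, hΦ0, one_mul]
  rw [one_div]
  refine (tendsto_integral_exp_div_exp (A := fun t => 2 * ∫ s in (0 : ℝ)..t, k s) (by positivity)
    (fun t => (hk.integral_hasStrictDerivAt 0 t).hasDerivAt.const_mul 2)
    (hk_lim.const_mul 2)).congr' ?_
  filter_upwards [eventually_ge_atTop 0] with t ht
  have hsq : ∀ s ∈ uIcc 0 t, exp (2 * ∫ u in (0 : ℝ)..s, k u) = (1 / Φ s) ^ 2 := fun s hs => by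
    rw [hΦ_exp s (uIcc_of_le ht ▸ hs).1, one_div, ← exp_neg, sq, ← exp_add]
    ring_nf
  rw [intervalIntegral.integral_congr hsq, hΦ_exp t ht, sq, ← exp_add, div_eq_inv_mul, ← exp_neg]
  ring_nf

/-- For a regular potential `V`, the fundamental solution `Φ` of the
linearization along the gradient flow `ψ` satisfies
`Φ t ^ 2 * ∫₀ᵗ (1 / Φ s)^2 ds → 1 / (2 V''(0))` as `t → +∞`. -/
theorem variance_normalization_tendsto
    (V ψ Φ : ℝ → ℝ) (x₀ : ℝ)
    (hV : ContDiff ℝ 3 V)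
    (hV0 : V 0 = 0)
    (hcrit : ∀ x : ℝ, deriv V x = 0 ↔ x = 0)
    (hV''0 : 0 < deriv (deriv V) 0)
    (hcoercive : Tendsto V (Filter.cocompact ℝ) atTop)
    (hx₀ : x₀ ≠ 0)
    (hψ0 : ψ 0 = x₀)
    (hψ : ∀ t : ℝ, 0 ≤ t → HasDerivAt ψ (-(deriv V (ψ t))) t)
    (hΦ0 : Φ 0 = 1)
    (hΦ : ∀ t : ℝ, 0 ≤ t → HasDerivAt Φ (-(deriv (deriv V) (ψ t)) * Φ t) t) :
    Tendsto (fun t : ℝ => (Φ t) ^ 2 * ∫ s in (0:ℝ)..t, (1 / Φ s) ^ 2) atTop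
      (nhds (1 / (2 * deriv (deriv V) 0))) :=
  variance_normalization_tendsto_general V ψ Φ hV hcrit hV''0 hcoercive hψ hΦ0 hΦ
end

section
/- Let V be a regular potential, let ψ be the solution of the gradient flow dψ_t = -V'(ψ_t)dt with ψ_0 = x₀ ∈ ℝ \ {0}, let Φ be the fundamental solution of dΦ_t = -V''(ψ_t)Φ_t dt with Φ_0 = 1, and let y₀ ∈ ℝ \ {0}. For ε > 0 and t > 0 define d_ε(t) := ‖N(Φ_t y₀, ε Φ_t² ∫₀ᵗ (1/Φ_s)² ds) − N(0, ε/(2V''(0)))‖ (this is the total variation distance between the law of the linearized diffusion y^ε at time t and its equilibrium law). Set t_ε := (1/(2V''(0)))(ln(1/ε) + ln(2V''(0) y₀²)) and w_ε := 1/V''(0). Let c ≠ 0 be the constant with lim_{t→∞} e^{V''(0)t} Φ_t = c, and define G(b) := ‖N(c e^{−b}, 1) − N(0, 1)‖. Then for every b ∈ ℝ, lim_{ε→0} d_ε(t_ε + b w_ε) = G(b); moreover lim_{b→−∞} G(b) = 1 and lim_{b→+∞} G(b) = 0. In particular the family of linearized diffusions presents profile cut-off at (t_ε, w_ε) with profile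 G. -/
/-!
Both laws are Gaussian, so rescaling by the equilibrium standard deviation `√(ε / (2a))`,
`a = V''(0)`, turns `d_ε(t)` into the total variation distance between `N(m, v)` and `N(0, 1)`
with `|m| = |Φ_t y₀| / √(ε / (2a))` and `v = 2a Φ_t² ∫₀ᵗ Φ_s⁻² ds`. Since `e^{at} Φ_t → c`, the
integral grows like `e^{2at} / (2a c²)`, so `v → 1`; and `t_ε` is tuned so that at
`t = t_ε + b / a` one has `|m| = |e^{at} Φ_t| e^{-b} → |c| e^{-b}`. Finally, for Gaussians with
densities `p, q` the total variation distance is `1 - ∫ min p q`, which by dominated convergence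
is continuous in the parameters and tends to `1` as the means separate.
-/

open Filter MeasureTheory ProbabilityTheory Real Set Asymptotics
open scoped NNReal ENNReal Topology

noncomputable def tvDist (P Q : Measure ℝ) : ℝ :=
  ⨆ A : {s : Set ℝ // MeasurableSet s}, |(P A.1).toReal - (Q A.1).toReal|

lemma tvDist_self (P : Measure ℝ) : tvDist P P = 0 := by
  simp [tvDist]

lemma tvDist_map_measurableEquiv (e : ℝ ≃ᵐ ℝ) (P Q : Measure ℝ) :
    tvDist (P.map e) (Q.map e) = tvDist P Q := by
  unfold tvDist
  refine Function.Surjective.iSup_congr (fun A => ⟨e ⁻¹' A.1, e.measurable A.2⟩)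
    (fun B => ⟨⟨e.symm ⁻¹' B.1, e.symm.measurable B.2⟩, ?_⟩) (fun A => ?_)
  · ext1; simp [← Set.preimage_comp]
  · simp [e.map_apply]

lemma tvDist_gaussianReal_abs_mean (μ : ℝ) (v w : ℝ≥0) :
    tvDist (gaussianReal |μ| v) (gaussianReal 0 w)
      = tvDist (gaussianReal μ v) (gaussianReal 0 w) := by
  rcases abs_choice μ with h | h
  · rw [h]
  · have := tvDist_map_measurableEquiv (.neg ℝ) (gaussianReal μ v) (gaussianReal 0 w)
    simp only [MeasurableEquiv.neg_apply, gaussianReal_map_neg, neg_zero] at this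
    rw [h, this]

lemma tvDist_gaussianReal_div_sqrt (μ : ℝ) (v : ℝ≥0) {s : ℝ≥0} (hs : s ≠ 0) :
    tvDist (gaussianReal μ v) (gaussianReal 0 s)
      = tvDist (gaussianReal (μ / √(s : ℝ)) (v / s)) (gaussianReal 0 1) := by
  have hc : (√(s : ℝ))⁻¹ ≠ 0 := by positivity
  have := tvDist_map_measurableEquiv (.mulRight₀ _ hc) (gaussianReal μ v) (gaussianReal 0 s)
  simp only [MeasurableEquiv.coe_mulRight₀, gaussianReal_map_mul_const, mul_zero] at this
  rw [← this]
  congr 2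
  · ring
  · ext; simp [inv_pow, div_eq_inv_mul]
  · ext; simp [inv_pow, hs]

section Overlap

variable {ν : Measure ℝ} {p q : ℝ → ℝ}

lemma setIntegral_sub_le_integral_sub_min (hp : Integrable p ν) (hq : Integrable q ν) (A : Set ℝ) :
    ∫ x in A, p x ∂ν - ∫ x in A, q x ∂ν ≤ ∫ x, (p x - min (p x) (q x)) ∂ν := by
  have hpq : Integrable (fun x => p x - min (p x) (q x)) ν := hp.sub (hp.inf hq)
  rw [← integral_sub hp.integrableOn hq.integrableOn]
  calc ∫ x in A, (p x - q x) ∂ν ≤ ∫ x in A, (p x - min (p x) (q x)) ∂ν :=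
        setIntegral_mono (hp.sub hq).integrableOn hpq.integrableOn
          fun x => sub_le_sub_left (min_le_right _ _) _
    _ ≤ ∫ x, (p x - min (p x) (q x)) ∂ν :=
        setIntegral_le_integral hpq (.of_forall fun x => sub_nonneg.2 (min_le_left _ _))

lemma setIntegral_sub_eq_integral_sub_min (hpm : Measurable p) (hqm : Measurable q)
    (hp : Integrable p ν) (hq : Integrable q ν) :
    ∫ x in {x | q x ≤ p x}, p x ∂ν - ∫ x in {x | q x ≤ p x}, q x ∂ν
      = ∫ x, (p x - min (p x) (q x)) ∂ν := by
  rw [← integral_sub hp.integrableOn hq.integrableOn,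
    setIntegral_congr_fun (measurableSet_le hqm hpm) (g := fun x => p x - min (p x) (q x))
      fun x (hx : q x ≤ p x) => by simp only [min_eq_right hx]]
  exact setIntegral_eq_integral_of_forall_compl_eq_zero fun x hx => by
    rw [min_eq_left (not_le.1 hx).le, sub_self]

theorem tvDist_eq_one_sub_integral_min {P Q : Measure ℝ} (hpm : Measurable p) (hqm : Measurable q)
    (hp : Integrable p ν) (hq : Integrable q ν) (hp1 : ∫ x, p x ∂ν = 1) (hq1 : ∫ x, q x ∂ν = 1)
    (hP : ∀ A, MeasurableSet A → (P A).toReal = ∫ x in A, p x ∂ν)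
    (hQ : ∀ A, MeasurableSet A → (Q A).toReal = ∫ x in A, q x ∂ν) :
    tvDist P Q = 1 - ∫ x, min (p x) (q x) ∂ν := by
  have hmin : Integrable (fun x => min (p x) (q x)) ν := hp.inf hq
  have hp_sub : ∫ x, (p x - min (p x) (q x)) ∂ν = 1 - ∫ x, min (p x) (q x) ∂ν := by
    rw [integral_sub hp hmin, hp1]
  have hq_sub : ∫ x, (q x - min (q x) (p x)) ∂ν = 1 - ∫ x, min (p x) (q x) ∂ν := by
    simp_rw [min_comm (q _)]
    rw [integral_sub hq hmin, hq1]
  have hbound (A : {s : Set ℝ // MeasurableSet s}) :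
      |(P A.1).toReal - (Q A.1).toReal| ≤ 1 - ∫ x, min (p x) (q x) ∂ν := by
    rw [hP _ A.2, hQ _ A.2, abs_le]
    constructor
    · linarith [setIntegral_sub_le_integral_sub_min hq hp A.1]
    · linarith [setIntegral_sub_le_integral_sub_min hp hq A.1]
  have hA : MeasurableSet {x | q x ≤ p x} := measurableSet_le hqm hpm
  unfold tvDist
  refine le_antisymm (ciSup_le hbound) (le_ciSup_of_le ⟨_, by rintro _ ⟨A, rfl⟩; exact hbound A⟩
    ⟨_, hA⟩ ?_)
  rw [hP _ hA, hQ _ hA, setIntegral_sub_eq_integral_sub_min hpm hqm hp hq, hp_sub]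
  exact le_abs_self _

end Overlap

theorem tvDist_gaussianReal (μ₁ μ₂ : ℝ) {v₁ v₂ : ℝ≥0} (h₁ : v₁ ≠ 0) (h₂ : v₂ ≠ 0) :
    tvDist (gaussianReal μ₁ v₁) (gaussianReal μ₂ v₂)
      = 1 - ∫ x, min (gaussianPDFReal μ₁ v₁ x) (gaussianPDFReal μ₂ v₂ x) := by
  have hreal (μ : ℝ) {v : ℝ≥0} (hv : v ≠ 0) (A : Set ℝ) :
      (gaussianReal μ v A).toReal = ∫ x in A, gaussianPDFReal μ v x := by
    rw [gaussianReal_apply_eq_integral _ hv,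
      ENNReal.toReal_ofReal (integral_nonneg fun x => gaussianPDFReal_nonneg _ _ _)]
  exact tvDist_eq_one_sub_integral_min
    (measurable_gaussianPDFReal _ _) (measurable_gaussianPDFReal _ _)
    (integrable_gaussianPDFReal _ _) (integrable_gaussianPDFReal _ _)
    (integral_gaussianPDFReal_eq_one _ h₁) (integral_gaussianPDFReal_eq_one _ h₂)
    (fun A _ => hreal μ₁ h₁ A) (fun A _ => hreal μ₂ h₂ A)

section GaussianOverlap

variable {α : Type*} {l : Filter α}

lemma continuousAt_gaussianPDFReal (x m : ℝ) {w : ℝ≥0} (hw : w ≠ 0) :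
    ContinuousAt (fun mv : ℝ × ℝ≥0 => gaussianPDFReal mv.1 mv.2 x) (m, w) := by
  have hw' : (w : ℝ) ≠ 0 := by exact_mod_cast hw
  simp only [gaussianPDFReal_def]
  fun_prop (disch := positivity)

lemma tendsto_gaussianPDFReal_of_tendsto_abs_mean {M : α → ℝ}
    (hM : Tendsto (fun a => |M a|) l atTop) {v : ℝ≥0} (hv : v ≠ 0) (x : ℝ) :
    Tendsto (fun a => gaussianPDFReal (M a) v x) l (𝓝 0) := by
  have hdist : Tendsto (fun a => |x - M a|) l atTop :=
    tendsto_atTop_mono (fun a => by linarith [abs_sub_abs_le_abs_sub (M a) x, abs_sub_comm x (M a)])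
      (tendsto_atTop_add_const_right _ (-|x|) hM)
  have hexponent : Tendsto (fun a => (x - M a) ^ 2 / (2 * v)) l atTop := by
    simp_rw [← sq_abs (x - _)]
    exact ((tendsto_pow_atTop two_ne_zero).comp hdist).atTop_div_const (by positivity)
  simp_rw [gaussianPDFReal_def, neg_div]
  simpa using (Real.tendsto_exp_neg_atTop_nhds_zero.comp hexponent).const_mul _

lemma tendsto_integral_min_gaussianPDFReal [l.IsCountablyGenerated] {M : α → ℝ} {W : α → ℝ≥0}
    {f : ℝ → ℝ} (h : ∀ x, Tendsto (fun a => gaussianPDFReal (M a) (W a) x) l (𝓝 (f x)))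
    (μ₀ : ℝ) (v₀ : ℝ≥0) :
    Tendsto (fun a => ∫ x, min (gaussianPDFReal (M a) (W a) x) (gaussianPDFReal μ₀ v₀ x)) l
      (𝓝 (∫ x, min (f x) (gaussianPDFReal μ₀ v₀ x))) := by
  refine tendsto_integral_filter_of_dominated_convergence (gaussianPDFReal μ₀ v₀)
    (.of_forall fun a => ((measurable_gaussianPDFReal _ _).min
      (measurable_gaussianPDFReal _ _)).aestronglyMeasurable)
    (.of_forall fun a => .of_forall fun x => ?_) (integrable_gaussianPDFReal _ _)
    (.of_forall fun x => (h x).min tendsto_const_nhds)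
  rw [Real.norm_of_nonneg (le_min (gaussianPDFReal_nonneg _ _ _) (gaussianPDFReal_nonneg _ _ _))]
  exact min_le_right _ _

theorem tendsto_tvDist_gaussianReal [l.IsCountablyGenerated] {M : α → ℝ} {W : α → ℝ≥0} {m : ℝ}
    {w : ℝ≥0} (hM : Tendsto M l (𝓝 m)) (hW : Tendsto W l (𝓝 w)) (hw : w ≠ 0) (μ₀ : ℝ)
    {v₀ : ℝ≥0} (hv₀ : v₀ ≠ 0) :
    Tendsto (fun a => tvDist (gaussianReal (M a) (W a)) (gaussianReal μ₀ v₀)) l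
      (𝓝 (tvDist (gaussianReal m w) (gaussianReal μ₀ v₀))) := by
  rw [tvDist_gaussianReal _ _ hw hv₀]
  refine .congr' ((hW.eventually_ne hw).mono fun a ha => (tvDist_gaussianReal _ _ ha hv₀).symm)
    (tendsto_const_nhds.sub (tendsto_integral_min_gaussianPDFReal (fun x => ?_) μ₀ v₀))
  exact (continuousAt_gaussianPDFReal x m hw).tendsto.comp (hM.prodMk_nhds hW)

theorem tendsto_tvDist_gaussianReal_of_tendsto_abs_mean [l.IsCountablyGenerated] {M : α → ℝ}
    (hM : Tendsto (fun a => |M a|) l atTop) (μ₀ : ℝ) {v v₀ : ℝ≥0} (hv : v ≠ 0) (hv₀ : v₀ ≠ 0) :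
    Tendsto (fun a => tvDist (gaussianReal (M a) v) (gaussianReal μ₀ v₀)) l (𝓝 1) := by
  simp_rw [tvDist_gaussianReal _ _ hv hv₀]
  simpa [min_eq_left (gaussianPDFReal_nonneg μ₀ v₀ _)] using
    tendsto_const_nhds (x := (1 : ℝ)).sub (tendsto_integral_min_gaussianPDFReal
    (tendsto_gaussianPDFReal_of_tendsto_abs_mean hM hv) μ₀ v₀)

end GaussianOverlap

theorem eq_exp_neg_integral_of_hasDerivAt {Φ q : ℝ → ℝ} (hq : ContinuousOn q (Ici 0))
    (hΦ0 : Φ 0 = 1) (hΦ : ∀ t, 0 ≤ t → HasDerivAt Φ (-q t * Φ t) t) {t : ℝ} (ht : 0 ≤ t) :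
    Φ t = exp (-∫ s in (0 : ℝ)..t, q s) := by
  -- `q` is only continuous on `[0, ∞)`; freezing it at `q 0` to the left gives a continuous
  -- function, whose primitive is differentiable at `0` as well.
  set Q : ℝ → ℝ := fun s => q (max s 0)
  have hQ : Continuous Q :=
    hq.comp_continuous (continuous_id.max continuous_const) fun s => le_max_right s 0
  have hQq : ∀ s, 0 ≤ s → Q s = q s := fun s hs => by simp [Q, max_eq_left hs]
  set F : ℝ → ℝ := fun u => Φ u * exp (∫ s in (0 : ℝ)..u, Q s)
  have hF : ∀ u, 0 ≤ u → HasDerivAt F 0 u := fun u hu =>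
    ((hΦ u hu).mul (hQ.integral_hasStrictDerivAt 0 u).hasDerivAt.exp).congr_deriv
      (by rw [hQq u hu]; ring)
  have hconst := constant_of_has_deriv_right_zero
    (fun u hu => (hF u hu.1).continuousAt.continuousWithinAt)
    (fun u hu => (hF u hu.1).hasDerivWithinAt) t ⟨ht, le_rfl⟩
  have hQint : ∫ s in (0 : ℝ)..t, Q s = ∫ s in (0 : ℝ)..t, q s :=
    intervalIntegral.integral_congr fun s hs => hQq s (by rw [uIcc_of_le ht] at hs; exact hs.1)
  simp only [F, hΦ0, intervalIntegral.integral_same, exp_zero, mul_one, hQint] at hconst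
  rw [exp_neg]
  exact eq_inv_of_mul_eq_one_left hconst

lemma integral_exp_mul (k t : ℝ) (hk : k ≠ 0) :
    ∫ s in (0 : ℝ)..t, exp (k * s) = (exp (k * t) - 1) / k := by
  simp [intervalIntegral.integral_comp_mul_left (fun s => exp s) hk, div_eq_inv_mul]

lemma tendsto_integral_exp_mul_atTop {k : ℝ} (hk : 0 < k) :
    Tendsto (fun t => ∫ s in (0 : ℝ)..t, exp (k * s)) atTop atTop := by
  simp_rw [integral_exp_mul _ _ hk.ne']
  exact (tendsto_atTop_add_const_right _ (-1)
    (tendsto_exp_atTop.comp (tendsto_id.const_mul_atTop hk))).atTop_div_const hk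

lemma integral_exp_mul_isBigO {k : ℝ} (hk : 0 < k) :
    (fun t => ∫ s in (0 : ℝ)..t, exp (k * s)) =O[atTop] fun t => exp (k * t) := by
  refine .of_bound k⁻¹ ((eventually_ge_atTop 0).mono fun t ht => ?_)
  have hexp_ge : 1 ≤ exp (k * t) := one_le_exp (by positivity)
  rw [integral_exp_mul _ _ hk.ne', norm_div, Real.norm_of_nonneg (by linarith),
    Real.norm_of_nonneg hk.le, Real.norm_of_nonneg (exp_pos _).le, div_eq_inv_mul]
  gcongr
  linarith

theorem Asymptotics.IsLittleO.intervalIntegral_atTop {E : Type*} [NormedAddCommGroup E]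
    [NormedSpace ℝ E] {f : ℝ → E} {g : ℝ → ℝ} (h : f =o[atTop] g)
    (hf : ∀ t, 0 ≤ t → IntervalIntegrable f volume 0 t)
    (hg : ∀ t, 0 ≤ t → IntervalIntegrable g volume 0 t) (hg0 : ∀ s, 0 ≤ s → 0 ≤ g s)
    (h'g : Tendsto (fun t => ∫ s in (0 : ℝ)..t, g s) atTop atTop) :
    (fun t => ∫ s in (0 : ℝ)..t, f s) =o[atTop] fun t => ∫ s in (0 : ℝ)..t, g s := by
  refine isLittleO_iff.2 fun ε hε => ?_
  obtain ⟨T, hT0, hT⟩ : ∃ T, 0 ≤ T ∧ ∀ s, T ≤ s → ‖f s‖ ≤ ε / 2 * g s := by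
    obtain ⟨T, hT⟩ := eventually_atTop.1 (isLittleO_iff.1 h (half_pos hε))
    exact ⟨max T 0, le_max_right _ _, fun s hs => by
      simpa [abs_of_nonneg (hg0 s ((le_max_right _ _).trans hs))]
        using hT s ((le_max_left _ _).trans hs)⟩
  have hhead : (fun _ => ∫ s in (0 : ℝ)..T, f s) =o[atTop] fun t => ∫ s in (0 : ℝ)..t, g s :=
    isLittleO_const_left.2 (.inr (tendsto_norm_atTop_atTop.comp h'g))
  filter_upwards [isLittleO_iff.1 hhead (half_pos hε), eventually_ge_atTop T]
    with t hhead_t hTt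
  have hgt : ‖∫ s in (0 : ℝ)..t, g s‖ = ∫ s in (0 : ℝ)..t, g s :=
    Real.norm_of_nonneg (intervalIntegral.integral_nonneg (hT0.trans hTt) fun s hs => hg0 s hs.1)
  calc ‖∫ s in (0 : ℝ)..t, f s‖
      = ‖(∫ s in (0 : ℝ)..T, f s) + ∫ s in T..t, f s‖ := by
        rw [intervalIntegral.integral_add_adjacent_intervals (hf T hT0)
          ((hf T hT0).symm.trans (hf t (hT0.trans hTt)))]
    _ ≤ ‖∫ s in (0 : ℝ)..T, f s‖ + ‖∫ s in T..t, f s‖ := norm_add_le _ _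
    _ ≤ ε / 2 * ‖∫ s in (0 : ℝ)..t, g s‖ + ∫ s in T..t, ε / 2 * g s := by
        gcongr
        exact intervalIntegral.norm_integral_le_of_norm_le hTt (.of_forall fun s hs => hT s hs.1.le)
          (((hg T hT0).symm.trans (hg t (hT0.trans hTt))).const_mul _)
    _ ≤ ε / 2 * ‖∫ s in (0 : ℝ)..t, g s‖ + ε / 2 * ∫ s in (0 : ℝ)..t, g s := by
        rw [intervalIntegral.integral_const_mul]
        gcongr
        exact intervalIntegral.integral_mono_interval hT0 hTt le_rfl
          ((ae_restrict_mem measurableSet_Ioc).mono fun s hs => hg0 s hs.1.le)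
          (hg t (hT0.trans hTt))
    _ = ε * ‖∫ s in (0 : ℝ)..t, g s‖ := by rw [hgt]; ring

theorem tendsto_exp_neg_mul_integral {g : ℝ → ℝ} {k L : ℝ} (hk : 0 < k)
    (hg : ∀ t, 0 ≤ t → IntervalIntegrable g volume 0 t)
    (hlim : Tendsto (fun s => g s * exp (-(k * s))) atTop (𝓝 L)) :
    Tendsto (fun t => exp (-(k * t)) * ∫ s in (0 : ℝ)..t, g s) atTop (𝓝 (L / k)) := by
  set r : ℝ → ℝ := fun s => g s - L * exp (k * s)
  have hexp_int : ∀ t, IntervalIntegrable (fun s => exp (k * s)) volume 0 t := fun t =>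
    (continuous_exp.comp (continuous_const_mul k)).intervalIntegrable 0 t
  have hr : r =o[atTop] fun s => exp (k * s) := by
    refine (isLittleO_iff_tendsto fun s hs => absurd hs (exp_pos _).ne').2 ?_
    refine (tendsto_sub_nhds_zero_iff.2 hlim).congr fun s => ?_
    simp only [r, exp_neg]
    field_simp
  have hr_int : (fun t => ∫ s in (0 : ℝ)..t, r s) =o[atTop] fun t => exp (k * t) :=
    (hr.intervalIntegral_atTop (fun t ht => (hg t ht).sub ((hexp_int t).const_mul L))
      (fun t _ => hexp_int t) (fun s _ => (exp_pos _).le)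
      (tendsto_integral_exp_mul_atTop hk)).trans_isBigO (integral_exp_mul_isBigO hk)
  have hrem : Tendsto (fun t => exp (-(k * t)) * ∫ s in (0 : ℝ)..t, r s) atTop (𝓝 0) := by
    simpa only [exp_neg, inv_mul_eq_div] using hr_int.tendsto_div_nhds_zero
  have hdecay : Tendsto (fun t => exp (-(k * t))) atTop (𝓝 0) :=
    tendsto_exp_neg_atTop_nhds_zero.comp (tendsto_id.const_mul_atTop hk)
  have hsum := hrem.add ((hdecay.const_sub 1).const_mul (L / k))
  rw [sub_zero, mul_one, zero_add] at hsum
  refine hsum.congr' ((eventually_ge_atTop 0).mono fun t ht => ?_)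
  simp only [r]
  rw [intervalIntegral.integral_sub (hg t ht) ((hexp_int t).const_mul L),
    intervalIntegral.integral_const_mul, integral_exp_mul _ _ hk.ne', exp_neg]
  field_simp
  ring

theorem tendsto_sq_mul_integral_inv_sq {Φ : ℝ → ℝ} {a c : ℝ} (ha : 0 < a)
    (hne : ∀ t, 0 ≤ t → Φ t ≠ 0) (hcont : ContinuousOn Φ (Ici 0)) (hc : c ≠ 0)
    (hlim : Tendsto (fun t => exp (a * t) * Φ t) atTop (𝓝 c)) :
    Tendsto (fun t => Φ t ^ 2 * ∫ s in (0 : ℝ)..t, (1 / Φ s) ^ 2) atTop (𝓝 (1 / (2 * a))) := by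
  have hint : ∀ t, 0 ≤ t → IntervalIntegrable (fun s => (1 / Φ s) ^ 2) volume 0 t := by
    intro t ht
    refine ContinuousOn.intervalIntegrable ((continuousOn_const.div (hcont.mono ?_) ?_).pow 2)
    all_goals rw [uIcc_of_le ht]
    · exact Icc_subset_Ici_self
    · exact fun s hs => hne s hs.1
  have hexp_sq : ∀ t, exp (a * t) ^ 2 = exp (2 * a * t) := fun t => by
    rw [← exp_nat_mul]; ring_nf
  have hweighted : Tendsto (fun s => (1 / Φ s) ^ 2 * exp (-(2 * a * s))) atTop (𝓝 ((1 / c) ^ 2)) :=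
    ((tendsto_const_nhds.div hlim hc).pow 2).congr fun s => by
      simp only [Pi.div_apply]
      rw [exp_neg, ← hexp_sq]
      ring
  have := (hlim.pow 2).mul (tendsto_exp_neg_mul_integral (by positivity) hint hweighted)
  rw [show c ^ 2 * ((1 / c) ^ 2 / (2 * a)) = 1 / (2 * a) by field_simp] at this
  refine this.congr fun t => ?_
  rw [mul_pow, exp_neg, ← hexp_sq]
  field_simp

noncomputable def cutoffTime (a y₀ ε : ℝ) : ℝ :=
  (1 / (2 * a)) * (log (1 / ε) + log (2 * a * y₀ ^ 2))

lemma exp_mul_cutoffTime {a ε y₀ : ℝ} (ha : 0 < a) (hε : 0 < ε) (hy₀ : y₀ ≠ 0) :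
    exp (a * cutoffTime a y₀ ε) = |y₀| / √(ε / (2 * a)) := by
  rw [cutoffTime, ← log_mul (by positivity) (by positivity),
    show a * ((1 / (2 * a)) * log (1 / ε * (2 * a * y₀ ^ 2)))
      = log (1 / ε * (2 * a * y₀ ^ 2)) / 2 by field_simp,
    exp_half, exp_log (by positivity), ← sqrt_sq_eq_abs, ← sqrt_div' _ (by positivity)]
  congr 1
  field_simp

lemma tendsto_cutoffTime {a : ℝ} (ha : 0 < a) (y₀ : ℝ) :
    Tendsto (cutoffTime a y₀) (𝓝[>] 0) atTop := by
  have hlog : Tendsto (fun ε : ℝ => log (1 / ε)) (𝓝[>] 0) atTop := by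
    simpa [log_inv] using tendsto_log_nhdsGT_zero
  exact (tendsto_atTop_add_const_right _ _ hlog).const_mul_atTop (by positivity)

lemma tvDist_gaussianReal_toNNReal_eq_standard {m v s : ℝ} (hv : 0 ≤ v) (hs : 0 < s) :
    tvDist (gaussianReal m v.toNNReal) (gaussianReal 0 s.toNNReal)
      = tvDist (gaussianReal (|m| / √s) (v / s).toNNReal) (gaussianReal 0 1) := by
  rw [← tvDist_gaussianReal_abs_mean, tvDist_gaussianReal_div_sqrt _ _ (by simpa using hs),
    Real.coe_toNNReal _ hs.le, Real.toNNReal_div hv]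

lemma tvDist_at_cutoffTime_eq {Φ : ℝ → ℝ} {a y₀ ε b t : ℝ} (ha : 0 < a) (hε : 0 < ε)
    (hy₀ : y₀ ≠ 0) (ht0 : 0 ≤ t) (ht : t = cutoffTime a y₀ ε + b / a) :
    tvDist (gaussianReal (Φ t * y₀) (ε * Φ t ^ 2 * ∫ s in (0 : ℝ)..t, (1 / Φ s) ^ 2).toNNReal)
        (gaussianReal 0 (ε / (2 * a)).toNNReal)
      = tvDist (gaussianReal |exp (a * t) * Φ t * exp (-b)|
          (2 * a * (Φ t ^ 2 * ∫ s in (0 : ℝ)..t, (1 / Φ s) ^ 2)).toNNReal) (gaussianReal 0 1) := by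
  have hJ_nonneg : 0 ≤ ∫ s in (0 : ℝ)..t, (1 / Φ s) ^ 2 :=
    intervalIntegral.integral_nonneg ht0 fun s _ => sq_nonneg _
  have hexp : exp (a * t) * exp (-b) = |y₀| / √(ε / (2 * a)) := by
    rw [← exp_mul_cutoffTime ha hε hy₀, ← exp_add, ht]
    field_simp
    ring_nf
  rw [tvDist_gaussianReal_toNNReal_eq_standard (by positivity) (by positivity)]
  congr 3
  · rw [mul_right_comm, hexp, abs_mul, abs_mul, abs_div, abs_abs, abs_of_nonneg (sqrt_nonneg _)]
    ring
  · field_simp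

theorem tendsto_tvDist_at_cutoffTime {Φ : ℝ → ℝ} {a c y₀ : ℝ} (ha : 0 < a) (hy₀ : y₀ ≠ 0)
    (hlim : Tendsto (fun t => exp (a * t) * Φ t) atTop (𝓝 c))
    (hJ : Tendsto (fun t => Φ t ^ 2 * ∫ s in (0 : ℝ)..t, (1 / Φ s) ^ 2) atTop (𝓝 (1 / (2 * a))))
    (b : ℝ) :
    Tendsto (fun ε => tvDist
        (gaussianReal (Φ (cutoffTime a y₀ ε + b / a) * y₀)
          (ε * Φ (cutoffTime a y₀ ε + b / a) ^ 2 *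
            ∫ s in (0 : ℝ)..cutoffTime a y₀ ε + b / a, (1 / Φ s) ^ 2).toNNReal)
        (gaussianReal 0 (ε / (2 * a)).toNNReal))
      (𝓝[>] 0) (𝓝 (tvDist (gaussianReal (c * exp (-b)) 1) (gaussianReal 0 1))) := by
  set T := fun ε => cutoffTime a y₀ ε + b / a
  have hT : Tendsto T (𝓝[>] 0) atTop := tendsto_atTop_add_const_right _ _ (tendsto_cutoffTime ha y₀)
  have hmean := ((hlim.comp hT).mul_const (exp (-b))).abs
  have hvar := (continuous_real_toNNReal.tendsto _).comp ((hJ.comp hT).const_mul (2 * a))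
  rw [mul_one_div_cancel (by positivity), Real.toNNReal_one] at hvar
  rw [← tvDist_gaussianReal_abs_mean]
  refine (tendsto_tvDist_gaussianReal hmean hvar one_ne_zero 0 one_ne_zero).congr' ?_
  filter_upwards [self_mem_nhdsWithin, hT.eventually_ge_atTop 0] with ε hε hTε
  exact (tvDist_at_cutoffTime_eq ha hε hy₀ hTε rfl).symm

theorem linearized_diffusion_profile_cutoff_general
    (V ψ Φ : ℝ → ℝ) (y₀ c : ℝ)
    (hV : ContDiff ℝ 3 V)
    (hV''0 : 0 < deriv (deriv V) 0)
    (hψ : ∀ t : ℝ, 0 ≤ t → HasDerivAt ψ (-(deriv V (ψ t))) t)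
    (hΦ0 : Φ 0 = 1)
    (hΦ : ∀ t : ℝ, 0 ≤ t → HasDerivAt Φ (-(deriv (deriv V) (ψ t)) * Φ t) t)
    (hy₀ : y₀ ≠ 0)
    (hc : c ≠ 0)
    (hclim : Tendsto (fun t : ℝ => Real.exp (deriv (deriv V) 0 * t) * Φ t) atTop (nhds c))
    (d : ℝ → ℝ → ℝ)
    (hd : ∀ ε t : ℝ, d ε t =
      tvDist
        (gaussianReal (Φ t * y₀)
          (ε * (Φ t) ^ 2 * ∫ s in (0:ℝ)..t, (1 / Φ s) ^ 2).toNNReal)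
        (gaussianReal 0 (ε / (2 * deriv (deriv V) 0)).toNNReal))
    (tc w : ℝ → ℝ)
    (htc : ∀ ε : ℝ, tc ε = (1 / (2 * deriv (deriv V) 0)) *
      (Real.log (1 / ε) + Real.log (2 * deriv (deriv V) 0 * y₀ ^ 2)))
    (hw : ∀ ε : ℝ, w ε = 1 / deriv (deriv V) 0)
    (G : ℝ → ℝ)
    (hG : ∀ b : ℝ, G b =
      tvDist (gaussianReal (c * Real.exp (-b)) 1) (gaussianReal 0 1)) :
    (∀ b : ℝ, Tendsto (fun ε : ℝ => d ε (tc ε + b * w ε))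
        (nhdsWithin 0 (Set.Ioi 0)) (nhds (G b))) ∧
      Tendsto G atBot (nhds 1) ∧ Tendsto G atTop (nhds 0) := by
  have hV'' : Continuous (deriv (deriv V)) :=
    (ContDiff.iterate_deriv' 0 2 (hV.of_le (by norm_num))).continuous
  have hΦpos : ∀ t, 0 ≤ t → 0 < Φ t := fun t ht =>
    eq_exp_neg_integral_of_hasDerivAt (fun s hs =>
      (hV''.continuousAt.comp (hψ s hs).continuousAt).continuousWithinAt) hΦ0 hΦ ht ▸ exp_pos _
  have hJ := tendsto_sq_mul_integral_inv_sq hV''0 (fun t ht => (hΦpos t ht).ne')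
    (fun t ht => (hΦ t ht).continuousAt.continuousWithinAt) hc hclim
  refine ⟨fun b => ?_, ?_, ?_⟩
  · simp only [hd, htc, hw, hG, mul_one_div]
    exact tendsto_tvDist_at_cutoffTime hV''0 hy₀ hclim hJ b
  · rw [funext hG]
    refine tendsto_tvDist_gaussianReal_of_tendsto_abs_mean ?_ 0 one_ne_zero one_ne_zero
    simp_rw [abs_mul, abs_of_pos (exp_pos _)]
    exact (tendsto_exp_atTop.comp tendsto_neg_atBot_atTop).const_mul_atTop (abs_pos.2 hc)
  · rw [funext hG]
    have hM : Tendsto (fun b => c * exp (-b)) atTop (𝓝 0) := by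
      simpa using (tendsto_exp_atBot.comp tendsto_neg_atTop_atBot).const_mul c
    simpa [tvDist_self] using
      tendsto_tvDist_gaussianReal hM tendsto_const_nhds one_ne_zero 0 one_ne_zero

/-- profile cut-off for the linearized diffusion.
With `d ε t` the total variation distance between the law
`N(Φ t y₀, ε Φ t² ∫₀ᵗ (1/Φ s)² ds)` of the linearized diffusion at time `t` and its
equilibrium `N(0, ε/(2V''(0)))`, with cut-off time
`t_ε = (1/(2V''(0)))(ln(1/ε) + ln(2V''(0) y₀²))`, window `w_ε = 1/V''(0)`,
`c ≠ 0` the limit of `e^{V''(0)t} Φ t`, and profile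
`G b = ‖N(c e^{-b},1) − N(0,1)‖`, one has `d ε (t_ε + b w_ε) → G b` as `ε → 0⁺` for
every `b`, with `G(b) → 1` as `b → -∞` and `G(b) → 0` as `b → +∞`. -/
theorem linearized_diffusion_profile_cutoff
    (V ψ Φ : ℝ → ℝ) (x₀ y₀ c : ℝ)
    (hV : ContDiff ℝ 3 V)
    (hV0 : V 0 = 0)
    (hcrit : ∀ x : ℝ, deriv V x = 0 ↔ x = 0)
    (hV''0 : 0 < deriv (deriv V) 0)
    (hcoercive : Tendsto V (Filter.cocompact ℝ) atTop)
    (hx₀ : x₀ ≠ 0)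
    (hψ0 : ψ 0 = x₀)
    (hψ : ∀ t : ℝ, 0 ≤ t → HasDerivAt ψ (-(deriv V (ψ t))) t)
    (hΦ0 : Φ 0 = 1)
    (hΦ : ∀ t : ℝ, 0 ≤ t → HasDerivAt Φ (-(deriv (deriv V) (ψ t)) * Φ t) t)
    (hy₀ : y₀ ≠ 0)
    (hc : c ≠ 0)
    (hclim : Tendsto (fun t : ℝ => Real.exp (deriv (deriv V) 0 * t) * Φ t) atTop (nhds c))
    (d : ℝ → ℝ → ℝ)
    (hd : ∀ ε t : ℝ, d ε t =
      tvDist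
        (gaussianReal (Φ t * y₀)
          (ε * (Φ t) ^ 2 * ∫ s in (0:ℝ)..t, (1 / Φ s) ^ 2).toNNReal)
        (gaussianReal 0 (ε / (2 * deriv (deriv V) 0)).toNNReal))
    (tc w : ℝ → ℝ)
    (htc : ∀ ε : ℝ, tc ε = (1 / (2 * deriv (deriv V) 0)) *
      (Real.log (1 / ε) + Real.log (2 * deriv (deriv V) 0 * y₀ ^ 2)))
    (hw : ∀ ε : ℝ, w ε = 1 / deriv (deriv V) 0)
    (G : ℝ → ℝ)
    (hG : ∀ b : ℝ, G b =
      tvDist (gaussianReal (c * Real.exp (-b)) 1) (gaussianReal 0 1)) :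
    (∀ b : ℝ, Tendsto (fun ε : ℝ => d ε (tc ε + b * w ε))
        (nhdsWithin 0 (Set.Ioi 0)) (nhds (G b))) ∧
      Tendsto G atBot (nhds 1) ∧ Tendsto G atTop (nhds 0) :=
  linearized_diffusion_profile_cutoff_general V ψ Φ y₀ c hV hV''0 hψ hΦ0 hΦ hy₀ hc hclim d hd tc w
    htc hw G hG
end

section
/- Let V be a smooth coercive regular potential with κ₂ := sup_x |V''(x)| < ∞. Let x₀ ∈ ℝ \ {0}, let ψ be the solution of dψ_t = -V'(ψ_t)dt with ψ_0 = x₀, let W : [0,∞) → ℝ be a continuous function with W(0) = 0 (a fixed Brownian path), set B_t := sup_{0≤s≤t} |W(s)|, and for ε > 0 let x^ε be a continuous solution of the integral equation x^ε_t = x₀ − ∫₀ᵗ V'(x^ε_s) ds + √ε W_t. Then for every t ≥ 0, |x^ε_t − ψ_t| ≤ √ε B_t (κ₂ t + 1). -/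
/-!
Write `x = ψ + Z + √ε W`. The remainder `Z` is differentiable with `Z' = V'(ψ) - V'(x)`.
Since `V'` is nondecreasing and `κ₂`-Lipschitz, wherever `Z > 0` we have
`ψ - x = -Z - √ε W ≤ √ε B`, hence `Z' ≤ κ₂ √ε B`; symmetrically `Z' ≥ -κ₂ √ε B` wherever `Z < 0`.
So `|Z|` grows at most at rate `κ₂ √ε B` from `Z 0 = 0`, and `|x - ψ| ≤ |Z| + √ε B`.
-/

open Filter Set

theorem intervalIntegral.hasDerivWithinAt_integral_Ici {E : Type*} [NormedAddCommGroup E]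
    [NormedSpace ℝ E] [CompleteSpace E] {f : ℝ → E} {a t : ℝ} (hf : ContinuousOn f (Ici a))
    (ht : a ≤ t) : HasDerivWithinAt (fun u => ∫ s in a..u, f s) (f t) (Ici t) t := by
  have hsub : Ioi t ⊆ Ici a := Ioi_subset_Ici ht
  refine intervalIntegral.integral_hasDerivWithinAt_right
    (hf.mono ?_).intervalIntegrable
    ((hf.mono hsub).stronglyMeasurableAtFilter_nhdsWithin measurableSet_Ioi t)
    ((hf t ht).mono hsub)
  rw [uIcc_of_le ht]
  exact Icc_subset_Ici_self

theorem intervalIntegral.hasDerivWithinAt_of_eq_integral_add {F x n : ℝ → ℝ} {x₀ t : ℝ}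
    (hF : Continuous F) (hx : ContinuousOn x (Ici 0))
    (heq : ∀ u, 0 ≤ u → x u = x₀ - (∫ s in (0:ℝ)..u, F (x s)) + n u) (ht : 0 ≤ t) :
    HasDerivWithinAt (fun u => x u - n u) (-F (x t)) (Ici t) t :=
  ((hasDerivWithinAt_integral_Ici (hF.comp_continuousOn hx) ht).const_sub x₀).congr_of_mem
    (fun u hu => by simp only [heq u (ht.trans hu), add_sub_cancel_right, Function.comp_apply])
    self_mem_Ici

theorem sub_le_mul_of_deriv_nonneg_of_deriv_le {f : ℝ → ℝ} (hf : Differentiable ℝ f)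
    {κ r a b : ℝ} (hf'0 : ∀ z, 0 ≤ deriv f z) (hf'κ : ∀ z, deriv f z ≤ κ) (hr : 0 ≤ r)
    (hab : a - b ≤ r) : f a - f b ≤ κ * r := by
  rcases le_total a b with h | h
  · linarith [monotone_of_deriv_nonneg hf hf'0 h, mul_nonneg ((hf'0 0).trans (hf'κ 0)) hr]
  · calc f a - f b ≤ κ * (a - b) := image_sub_le_mul_sub_of_deriv_le hf hf'κ h
      _ ≤ κ * r := mul_le_mul_of_nonneg_left hab ((hf'0 0).trans (hf'κ 0))

theorem image_le_mul_sub_of_deriv_right_le_of_pos {f f' : ℝ → ℝ} {a b C : ℝ} (hC : 0 ≤ C)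
    (hf : ContinuousOn f (Icc a b)) (hf' : ∀ t ∈ Ico a b, HasDerivWithinAt f (f' t) (Ici t) t)
    (ha : f a ≤ 0) (bound : ∀ t ∈ Ico a b, 0 < f t → f' t ≤ C) :
    ∀ ⦃t⦄, t ∈ Icc a b → f t ≤ C * (t - a) := by
  intro t ht
  have hta : 0 < t - a + 1 := by linarith [ht.1]
  refine le_of_forall_pos_le_add fun ε hε => ?_
  set η := ε / (t - a + 1) with hη_def
  have hη : 0 < η := div_pos hε hta
  -- `f` can only touch the barrier `C (s - a) + η (s - a + 1)` where `f > 0`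
  have := image_le_of_deriv_right_lt_deriv_boundary (B := fun s => C * (s - a) + η * (s - a + 1))
    (B' := fun _ => C + η) hf hf' (by linarith)
    (fun s => by
      simpa using (((hasDerivAt_id s).sub_const a).const_mul C).fun_add
        ((((hasDerivAt_id s).sub_const a).add_const 1).const_mul η))
    (fun s hs hfs => by
      have : 0 < f s := hfs ▸ add_pos_of_nonneg_of_pos
        (mul_nonneg hC (sub_nonneg.2 hs.1)) (mul_pos hη (by linarith [hs.1]))
      linarith [bound s hs this]) ht
  calc f t ≤ C * (t - a) + η * (t - a + 1) := this
    _ = C * (t - a) + ε := by rw [hη_def, div_mul_cancel₀ _ hta.ne']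

theorem abs_image_le_mul_sub_of_deriv_right_le {f f' : ℝ → ℝ} {a b C : ℝ} (hab : a ≤ b)
    (hf : ContinuousOn f (Icc a b)) (hf' : ∀ t ∈ Ico a b, HasDerivWithinAt f (f' t) (Ici t) t)
    (hC : 0 ≤ C) (ha : f a = 0) (hpos : ∀ t ∈ Ico a b, 0 < f t → f' t ≤ C)
    (hneg : ∀ t ∈ Ico a b, f t < 0 → -C ≤ f' t) : |f b| ≤ C * (b - a) := by
  have hb : b ∈ Icc a b := right_mem_Icc.2 hab
  have hup := image_le_mul_sub_of_deriv_right_le_of_pos hC hf hf' ha.le hpos hb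
  have hlow := image_le_mul_sub_of_deriv_right_le_of_pos hC hf.neg (fun t ht => (hf' t ht).neg)
    (by simp [ha]) (fun t ht hft => by linarith [hneg t ht (by simpa using hft)]) hb
  rw [abs_le]
  constructor <;> simp only [Pi.neg_apply] at hlow <;> linarith

theorem IsCompact.le_ciSup_of_continuousOn {X : Type*} [TopologicalSpace X] {K : Set X}
    (hK : IsCompact K) {f : X → ℝ} (hf : ContinuousOn f K) {x : X} (hx : x ∈ K) :
    f x ≤ ⨆ y : K, f y :=
  le_ciSup (f := fun y : K => f y) (by simpa [image_eq_range] using hK.bddAbove_image hf) ⟨x, hx⟩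

theorem abs_sub_sub_le_mul_of_eq_integral_add {f x ψ n : ℝ → ℝ} {x₀ κ r T : ℝ}
    (hf : Differentiable ℝ f) (hf'0 : ∀ z, 0 ≤ deriv f z) (hf'κ : ∀ z, deriv f z ≤ κ)
    (hT : 0 ≤ T) (hn : ContinuousOn n (Icc 0 T)) (hnr : ∀ s ∈ Icc 0 T, |n s| ≤ r)
    (hxc : ContinuousOn x (Ici 0))
    (hx : ∀ t, 0 ≤ t → x t = x₀ - (∫ s in (0:ℝ)..t, f (x s)) + n t)
    (hψ0 : ψ 0 = x₀) (hψ : ∀ t, 0 ≤ t → HasDerivAt ψ (-f (ψ t)) t) :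
    |x T - n T - ψ T| ≤ κ * r * T := by
  have hr : 0 ≤ r := (abs_nonneg _).trans (hnr T ⟨hT, le_rfl⟩)
  have hslope (a b : ℝ) (hab : a - b ≤ r) : f a - f b ≤ κ * r :=
    sub_le_mul_of_deriv_nonneg_of_deriv_le hf hf'0 hf'κ hr hab
  have hderiv : ∀ t ∈ Ico 0 T, HasDerivWithinAt (x - n - ψ) (f (ψ t) - f (x t)) (Ici t) t :=
    fun t ht => ((intervalIntegral.hasDerivWithinAt_of_eq_integral_add hf.continuous hxc hx
      ht.1).fun_sub (hψ t ht.1).hasDerivWithinAt).congr_deriv (by ring)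
  have hψc : ContinuousOn ψ (Icc 0 T) := fun t ht =>
    (hψ t ht.1).continuousAt.continuousWithinAt
  simpa using abs_image_le_mul_sub_of_deriv_right_le hT
    (((hxc.mono Icc_subset_Ici_self).sub hn).sub hψc) hderiv
    (mul_nonneg ((hf'0 0).trans (hf'κ 0)) hr) (by simp [hx 0 le_rfl, hψ0])
    (fun t ht hZt => hslope _ _ <| by
      simp only [Pi.sub_apply] at hZt
      linarith [abs_le.1 (hnr t (Ico_subset_Icc_self ht))])
    (fun t ht hZt => neg_le.2 <| (neg_sub _ _).trans_le <| hslope _ _ <| by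
      simp only [Pi.sub_apply] at hZt
      linarith [abs_le.1 (hnr t (Ico_subset_Icc_self ht))])

theorem zeroth_order_estimate_general
    (V ψ W x : ℝ → ℝ) (x₀ ε δ : ℝ)
    (hV : ContDiff ℝ 3 V)
    (hδ : 0 < δ)
    (hconvex : ∀ z : ℝ, δ ≤ deriv (deriv V) z)
    (hbdd2 : BddAbove (Set.range fun z : ℝ => |deriv (deriv V) z|))
    (hψ0 : ψ 0 = x₀)
    (hψ : ∀ t : ℝ, 0 ≤ t → HasDerivAt ψ (-(deriv V (ψ t))) t)
    (hW : ContinuousOn W (Set.Ici 0))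
    (hxcont : ContinuousOn x (Set.Ici 0))
    (hx : ∀ t : ℝ, 0 ≤ t →
      x t = x₀ - (∫ s in (0:ℝ)..t, deriv V (x s)) + Real.sqrt ε * W t) :
    ∀ t : ℝ, 0 ≤ t →
      |x t - ψ t| ≤ Real.sqrt ε * (⨆ s : Set.Icc (0:ℝ) t, |W s|) *
        ((⨆ z : ℝ, |deriv (deriv V) z|) * t + 1) := by
  intro T hT
  set B := ⨆ s : Icc (0:ℝ) T, |W s|
  have hWB : ∀ s ∈ Icc 0 T, |Real.sqrt ε * W s| ≤ Real.sqrt ε * B := fun s hs => by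
    rw [abs_mul, abs_of_nonneg (Real.sqrt_nonneg ε)]
    exact mul_le_mul_of_nonneg_left
      (isCompact_Icc.le_ciSup_of_continuousOn (hW.mono Icc_subset_Ici_self).abs hs)
      (Real.sqrt_nonneg ε)
  have hrem := abs_sub_sub_le_mul_of_eq_integral_add
    ((hV.of_le (by norm_num)).differentiable_deriv_two) (fun z => hδ.le.trans (hconvex z))
    (fun z => (le_abs_self _).trans (le_ciSup hbdd2 z)) hT
    ((continuousOn_const.mul hW).mono Icc_subset_Ici_self) hWB hxcont hx hψ0 hψ
  calc |x T - ψ T| = |(x T - Real.sqrt ε * W T - ψ T) + Real.sqrt ε * W T| := by congr 1; ring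
    _ ≤ |x T - Real.sqrt ε * W T - ψ T| + |Real.sqrt ε * W T| := abs_add_le _ _
    _ ≤ (⨆ z : ℝ, |deriv (deriv V) z|) * (Real.sqrt ε * B) * T + Real.sqrt ε * B :=
      add_le_add hrem (hWB T ⟨hT, le_rfl⟩)
    _ = Real.sqrt ε * B * ((⨆ z : ℝ, |deriv (deriv V) z|) * T + 1) := by ring

/-- zeroth order estimate. For a smooth coercive regular potential `V`,
a fixed continuous path `W` with `W 0 = 0`, `B t := sup_{0 ≤ s ≤ t} |W s|`,
`κ₂ := sup_x |V''(x)|`, the solution `x^ε` of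
`x^ε_t = x₀ - ∫₀ᵗ V'(x^ε_s) ds + √ε W_t` and the gradient flow `ψ` started at `x₀`
satisfy `|x^ε_t - ψ_t| ≤ √ε B_t (κ₂ t + 1)` for every `t ≥ 0`. -/
theorem zeroth_order_estimate
    (V ψ W x : ℝ → ℝ) (x₀ ε δ : ℝ)
    (hV : ContDiff ℝ 3 V)
    (hV0 : V 0 = 0)
    (hcrit : ∀ z : ℝ, deriv V z = 0 ↔ z = 0)
    (hV''0 : 0 < deriv (deriv V) 0)
    (hcoercive : Tendsto V (Filter.cocompact ℝ) atTop)
    (hδ : 0 < δ)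
    (hconvex : ∀ z : ℝ, δ ≤ deriv (deriv V) z)
    (hbdd2 : BddAbove (Set.range fun z : ℝ => |deriv (deriv V) z|))
    (hbdd3 : BddAbove (Set.range fun z : ℝ => |deriv (deriv (deriv V)) z|))
    (hx₀ : x₀ ≠ 0)
    (hψ0 : ψ 0 = x₀)
    (hψ : ∀ t : ℝ, 0 ≤ t → HasDerivAt ψ (-(deriv V (ψ t))) t)
    (hW : ContinuousOn W (Set.Ici 0))
    (hW0 : W 0 = 0)
    (hε : 0 < ε)
    (hxcont : ContinuousOn x (Set.Ici 0))
    (hx : ∀ t : ℝ, 0 ≤ t →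
      x t = x₀ - (∫ s in (0:ℝ)..t, deriv V (x s)) + Real.sqrt ε * W t) :
    ∀ t : ℝ, 0 ≤ t →
      |x t - ψ t| ≤ Real.sqrt ε * (⨆ s : Set.Icc (0:ℝ) t, |W s|) *
        ((⨆ z : ℝ, |deriv (deriv V) z|) * t + 1) :=
  zeroth_order_estimate_general V ψ W x x₀ ε δ hV hδ hconvex hbdd2 hψ0 hψ hW hxcont hx
end

section
/- Let V be a smooth coercive regular potential with κ₂ := sup_x |V''(x)| < ∞ and κ₃ := sup_x |V'''(x)| < ∞. Let x₀ ∈ ℝ \ {0}, let ψ solve dψ_t = -V'(ψ_t)dt with ψ_0 = x₀, let W : [0,∞) → ℝ be a continuous function with W(0) = 0, set B_t := sup_{0≤s≤t} |W(s)|, let y be the continuous solution of the integral equation y_t = −∫₀ᵗ V''(ψ_s) y_s ds + W_t, and for ε > 0 let x^ε be a continuous solution of x^ε_t = x₀ − ∫₀ᵗ V'(x^ε_s) ds + √ε W_t. Then for every t ≥ 0, |x^ε_t − ψ_t − √ε y_t| ≤ ε B_t² κ₃ (κ₂ t + 1)³ t. -/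
/-!
Write `z = x - ψ`. Since `V'` is monotone, `u = z - √ε W` solves `u' = -(V'(x) - V'(ψ))`,
whose sign pushes `u` back towards `0` as soon as `|u| > √ε B_t`; hence `|z| ≤ 2 √ε B_t`, and
integrating `|u'| ≤ κ₂ |z|` improves this to `|z_s| ≤ √ε B_t (1 + 2 κ₂ s)`. The remainder
`ρ = z - √ε y` solves the linear equation `ρ' = -V''(ψ) ρ - R`, where `R` is the first-order
Taylor remainder of `V'` at `ψ`, so `|R| ≤ κ₃ z² / 2`. As `V'' ≥ 0`, the linear term only damps
`ρ`, which gives `|ρ_t| ≤ t sup |R|`; and `(1 + 2a)² / 2 ≤ (1 + a)³` for `a ≥ 0`.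
-/

open Filter Set

theorem image_le_of_deriv_right_le_deriv_boundary_of_lt {f f' B B' : ℝ → ℝ} {a b : ℝ}
    (hf : ContinuousOn f (Icc a b)) (hf' : ∀ x ∈ Ico a b, HasDerivWithinAt f (f' x) (Ici x) x)
    (ha : f a ≤ B a) (hB : ContinuousOn B (Icc a b))
    (hB' : ∀ x ∈ Ico a b, HasDerivWithinAt B (B' x) (Ici x) x)
    (bound : ∀ x ∈ Ico a b, B x < f x → f' x ≤ B' x) :
    ∀ ⦃x⦄, x ∈ Icc a b → f x ≤ B x := by
  -- With the `1 +`, a contact with the raised barrier forces `B x < f x`, even at `x = a`.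
  have slack : ∀ x ∈ Icc a b, ∀ r > 0, f x ≤ B x + r * (1 + (x - a)) := fun x hx r hr => by
    refine image_le_of_deriv_right_lt_deriv_boundary' hf hf' (B' := fun x => B' x + r) ?_
      (hB.add (by fun_prop : Continuous fun x => r * (1 + (x - a))).continuousOn)
      (fun x hx => ?_) (fun x hx hfx => ?_) hx
    · simpa using ha.trans (le_add_of_nonneg_right hr.le)
    · simpa using (hB' x hx).add
        ((((hasDerivWithinAt_id x (Ici x)).sub_const a).const_add 1).const_mul r)
    · have : B x < f x := by simp only [Pi.add_apply] at hfx; rw [hfx]; nlinarith [hx.1]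
      linarith [bound x hx this]
  intro x hx
  have : ContinuousWithinAt (fun r => B x + r * (1 + (x - a))) (Ioi 0) 0 := by fun_prop
  convert! continuousWithinAt_const.closure_le _ this (slack x hx) using 1 <;> simp

theorem abs_image_le_of_deriv_right_le_deriv_boundary_of_lt {f f' B B' : ℝ → ℝ} {a b : ℝ}
    (hf : ContinuousOn f (Icc a b)) (hf' : ∀ x ∈ Ico a b, HasDerivWithinAt f (f' x) (Ici x) x)
    (ha : |f a| ≤ B a) (hB : ContinuousOn B (Icc a b))
    (hB' : ∀ x ∈ Ico a b, HasDerivWithinAt B (B' x) (Ici x) x)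
    (upper : ∀ x ∈ Ico a b, B x < f x → f' x ≤ B' x)
    (lower : ∀ x ∈ Ico a b, f x < -B x → -B' x ≤ f' x) :
    ∀ ⦃x⦄, x ∈ Icc a b → |f x| ≤ B x := by
  intro x hx
  have hneg := image_le_of_deriv_right_le_deriv_boundary_of_lt hf.neg
    (fun x hx => (hf' x hx).neg) (by simp only [Pi.neg_apply]; linarith [(abs_le.1 ha).1]) hB hB'
    (fun x hx h => by simp only [Pi.neg_apply] at h; linarith [lower x hx (by linarith)]) hx
  simp only [Pi.neg_apply] at hneg
  exact abs_le.2 ⟨by linarith,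
    image_le_of_deriv_right_le_deriv_boundary_of_lt hf hf' (abs_le.1 ha).2 hB hB' upper hx⟩

theorem abs_sub_sub_mul_le_of_abs_deriv_sub_le {f f' : ℝ → ℝ} {a b K : ℝ}
    (hf : ∀ z, HasDerivAt f (f' z) z) (hf' : ∀ z, |f' z - f' a| ≤ K * |z - a|) :
    |f b - f a - f' a * (b - a)| ≤ K / 2 * (b - a) ^ 2 := by
  wlog hab : a ≤ b generalizing f f' a b
  · have := this (f := fun z => f (-z)) (f' := fun z => -f' (-z)) (a := -a) (b := -b)
      (fun z => by simpa [Function.comp_def] using (hf (-z)).comp z (hasDerivAt_neg' z))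
      (fun z => by
        rw [neg_neg, show -f' (-z) - -f' a = -(f' (-z) - f' a) by ring, abs_neg,
          show z - -a = -(-z - a) by ring, abs_neg]
        exact hf' (-z)) (by linarith)
    simp only [neg_neg] at this
    convert this using 2 <;> ring
  have hK : ∀ z ∈ Ico a b, ‖f' z - f' a‖ ≤ K * (z - a) := fun z hz => by
    simpa [abs_of_nonneg (sub_nonneg.2 hz.1)] using hf' z
  have hfc : Continuous f := continuous_iff_continuousAt.2 fun z => (hf z).continuousAt
  have := image_norm_le_of_norm_deriv_right_le_deriv_boundary
    (f := fun z => f z - f a - f' a * (z - a)) (B := fun z => K / 2 * (z - a) ^ 2)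
    (by fun_prop) (fun z _ => ?_) (by simp) (fun z => ?_) hK ⟨hab, le_rfl⟩
  · simpa using this
  · exact ((((hf z).sub_const (f a)).sub
      (((hasDerivAt_id' z).sub_const a).const_mul (f' a))).congr_deriv (by ring)).hasDerivWithinAt
  · exact ((((hasDerivAt_id' z).sub_const a).pow 2).const_mul (K / 2)).congr_deriv
      (by norm_num; ring)

theorem abs_sub_le_of_abs_deriv_le {f : ℝ → ℝ} {C : ℝ} (hf : Differentiable ℝ f)
    (bound : ∀ z, |deriv f z| ≤ C) (p q : ℝ) : |f p - f q| ≤ C * |p - q| := by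
  simpa using Convex.norm_image_sub_le_of_norm_deriv_le (fun z _ => hf z) (fun z _ => bound z)
    convex_univ (mem_univ q) (mem_univ p)

theorem abs_le_iSup_abs_of_continuousOn {W : ℝ → ℝ} {a b s : ℝ} (hW : ContinuousOn W (Icc a b))
    (hs : s ∈ Icc a b) : |W s| ≤ ⨆ r : Icc a b, |W r| := by
  refine le_ciSup (f := fun r : Icc a b => |W r|) ?_ ⟨s, hs⟩
  simpa only [image_eq_range] using isCompact_Icc.bddAbove_image hW.abs

theorem hasDerivWithinAt_Ici_of_eq_sub_integral {f g : ℝ → ℝ} {a c τ : ℝ}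
    (hg : ContinuousOn g (Ici a)) (hf : ∀ σ, a ≤ σ → f σ = c - ∫ s in a..σ, g s) (hτ : a ≤ τ) :
    HasDerivWithinAt f (-g τ) (Ici τ) τ := by
  have hsub : Ioi τ ⊆ Ici a := Ioi_subset_Ici hτ
  have hprim : HasDerivWithinAt (fun σ => ∫ s in a..σ, g s) (g τ) (Ici τ) τ :=
    intervalIntegral.integral_hasDerivWithinAt_right
      ((hg.mono (by simpa [uIcc_of_le hτ] using Icc_subset_Ici_self)).intervalIntegrable)
      ((hg.mono hsub).stronglyMeasurableAtFilter_nhdsWithin measurableSet_Ioi τ)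
      ((hg τ hτ).mono hsub)
  exact (hprim.const_sub c).congr (fun σ hσ => hf σ (hτ.trans hσ)) (hf τ hτ)

theorem abs_sub_le_of_hasDerivWithinAt_monotone {F x ψ w : ℝ → ℝ} {a b c κ : ℝ}
    (hF : Monotone F) (hlip : ∀ p q, |F p - F q| ≤ κ * |p - q|)
    (hcont : ContinuousOn (fun s => x s - ψ s - w s) (Icc a b))
    (hderiv : ∀ s ∈ Ico a b,
      HasDerivWithinAt (fun s => x s - ψ s - w s) (-(F (x s) - F (ψ s))) (Ici s) s)
    (h0 : x a - ψ a - w a = 0) (hw : ∀ s ∈ Icc a b, |w s| ≤ c) :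
    ∀ s ∈ Icc a b, |x s - ψ s| ≤ c * (1 + 2 * κ * (s - a)) := by
  intro s hs
  have hc : 0 ≤ c := (abs_nonneg _).trans (hw a ⟨le_rfl, hs.1.trans hs.2⟩)
  have hκ : 0 ≤ κ := by simpa using (abs_nonneg _).trans (hlip 1 0)
  have htri : ∀ s, |x s - ψ s| ≤ |x s - ψ s - w s| + |w s| := fun s => by
    simpa using abs_add_le (x s - ψ s - w s) (w s)
  have hu : ∀ s ∈ Icc a b, |x s - ψ s - w s| ≤ c :=
    abs_image_le_of_deriv_right_le_deriv_boundary_of_lt hcont hderiv (by simpa [h0] using hc)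
      continuousOn_const (fun _ _ => hasDerivWithinAt_const _ _ _)
      (fun s hs h => by
        have := hF (show ψ s ≤ x s by linarith [(abs_le.1 (hw s (Ico_subset_Icc_self hs))).1])
        linarith)
      (fun s hs h => by
        have := hF (show x s ≤ ψ s by linarith [(abs_le.1 (hw s (Ico_subset_Icc_self hs))).2])
        linarith)
  have hdrift : ∀ s ∈ Ico a b, ‖-(F (x s) - F (ψ s))‖ ≤ κ * (2 * c) := fun s hs => by
    have hz : |x s - ψ s| ≤ 2 * c := by
      linarith [htri s, hu s (Ico_subset_Icc_self hs), hw s (Ico_subset_Icc_self hs)]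
    rw [Real.norm_eq_abs, abs_neg]
    exact (hlip _ _).trans (mul_le_mul_of_nonneg_left hz hκ)
  have hu' := norm_image_sub_le_of_norm_deriv_right_le_segment hcont hderiv hdrift s hs
  rw [h0, sub_zero, Real.norm_eq_abs] at hu'
  linarith [htri s, hw s hs]

theorem abs_le_mul_of_hasDerivWithinAt_neg_mul_sub {ρ p r : ℝ → ℝ} {a b C : ℝ}
    (hρ : ContinuousOn ρ (Icc a b))
    (hρ' : ∀ x ∈ Ico a b, HasDerivWithinAt ρ (-(p x * ρ x) - r x) (Ici x) x)
    (hp : ∀ x ∈ Ico a b, 0 ≤ p x) (hr : ∀ x ∈ Ico a b, |r x| ≤ C) (h0 : ρ a = 0) :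
    ∀ x ∈ Icc a b, |ρ x| ≤ C * (x - a) := by
  refine abs_image_le_of_deriv_right_le_deriv_boundary_of_lt hρ hρ' (by simp [h0])
    (by fun_prop) (fun x _ => ((((hasDerivAt_id' x).sub_const a).const_mul C).congr_deriv
      (mul_one C)).hasDerivWithinAt) (fun x hx h => ?_) (fun x hx h => ?_)
  · have hC := (abs_nonneg _).trans (hr x hx)
    have := mul_nonneg (hp x hx) (show 0 ≤ ρ x by nlinarith [hx.1])
    linarith [(abs_le.1 (hr x hx)).1]
  · have hC := (abs_nonneg _).trans (hr x hx)
    have := mul_nonpos_of_nonneg_of_nonpos (hp x hx) (show ρ x ≤ 0 by nlinarith [hx.1])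
    linarith [(abs_le.1 (hr x hx)).2]

theorem first_order_estimate_of_drift {F F' ψ W x y : ℝ → ℝ} {x₀ σ κ₂ κ₃ B t : ℝ}
    (hF : ∀ z, HasDerivAt F (F' z) z) (hF'c : Continuous F') (hF'nonneg : ∀ z, 0 ≤ F' z)
    (hκ₂ : ∀ p q, |F p - F q| ≤ κ₂ * |p - q|) (hκ₃ : ∀ p q, |F' p - F' q| ≤ κ₃ * |p - q|)
    (hσ : 0 ≤ σ) (hψ0 : ψ 0 = x₀) (hψ : ∀ s, 0 ≤ s → HasDerivAt ψ (-(F (ψ s))) s)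
    (hW : ContinuousOn W (Ici 0)) (hB : ∀ s ∈ Icc 0 t, |W s| ≤ B)
    (hycont : ContinuousOn y (Ici 0))
    (hy : ∀ s, 0 ≤ s → y s = -(∫ r in (0:ℝ)..s, F' (ψ r) * y r) + W s)
    (hxcont : ContinuousOn x (Ici 0))
    (hx : ∀ s, 0 ≤ s → x s = x₀ - (∫ r in (0:ℝ)..s, F (x r)) + σ * W s) (ht : 0 ≤ t) :
    |x t - ψ t - σ * y t| ≤ κ₃ / 2 * (σ * B * (1 + 2 * κ₂ * t)) ^ 2 * t := by
  have hFc : Continuous F := continuous_iff_continuousAt.2 fun z => (hF z).continuousAt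
  have hmono : Monotone F := monotone_of_deriv_nonneg (fun z => (hF z).differentiableAt)
    fun z => (hF z).deriv ▸ hF'nonneg z
  have hψc : ContinuousOn ψ (Ici 0) := fun s hs => (hψ s hs).continuousAt.continuousWithinAt
  have hxW : ∀ s, 0 ≤ s → HasDerivWithinAt (fun r => x r - σ * W r) (-F (x s)) (Ici s) s :=
    fun s hs => hasDerivWithinAt_Ici_of_eq_sub_integral (g := fun r => F (x r))
      (hFc.comp_continuousOn hxcont) (fun r hr => by rw [hx r hr]; ring) hs
  have hyW : ∀ s, 0 ≤ s → HasDerivWithinAt (fun r => y r - W r) (-(F' (ψ s) * y s)) (Ici s) s :=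
    fun s hs => hasDerivWithinAt_Ici_of_eq_sub_integral (g := fun r => F' (ψ r) * y r) (c := 0)
      ((hF'c.comp_continuousOn hψc).mul hycont) (fun r hr => by rw [hy r hr]; ring) hs
  have hIcc : Icc 0 t ⊆ Ici 0 := Icc_subset_Ici_self
  have hκ₂0 : 0 ≤ κ₂ := by simpa using (abs_nonneg _).trans (hκ₂ 1 0)
  have hσB : 0 ≤ σ * B := mul_nonneg hσ ((abs_nonneg _).trans (hB 0 ⟨le_rfl, ht⟩))
  have hz : ∀ s ∈ Icc 0 t, |x s - ψ s| ≤ σ * B * (1 + 2 * κ₂ * t) := by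
    intro s hs
    refine (abs_sub_le_of_hasDerivWithinAt_monotone (w := fun s => σ * W s) (c := σ * B) hmono
      hκ₂ ((by fun_prop : ContinuousOn (fun r => x r - ψ r - σ * W r) (Ici 0)).mono hIcc)
      (fun s hs => ?_) (by rw [hx 0 le_rfl, hψ0]; simp) (fun s hs => ?_) s hs).trans ?_
    · exact (((hxW s hs.1).sub (hψ s hs.1).hasDerivWithinAt).congr
        (fun r _ => by simp only [Pi.sub_apply]; ring)
        (by simp only [Pi.sub_apply]; ring)).congr_deriv (by ring)
    · rw [abs_mul, abs_of_nonneg hσ]; exact mul_le_mul_of_nonneg_left (hB s hs) hσ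
    · gcongr; linarith [hs.2]
  set ρ := fun r => x r - ψ r - σ * y r
  set R := fun r => F (x r) - F (ψ r) - F' (ψ r) * (x r - ψ r)
  have hρ' : ∀ s ∈ Ico 0 t, HasDerivWithinAt ρ (-(F' (ψ s) * ρ s) - R s) (Ici s) s := by
    intro s hs
    have := ((hxW s hs.1).sub (hψ s hs.1).hasDerivWithinAt).sub ((hyW s hs.1).const_mul σ)
    exact (this.congr (fun r _ => by simp only [ρ, Pi.sub_apply]; ring)
      (by simp only [ρ, Pi.sub_apply]; ring)).congr_deriv (by simp only [ρ, R]; ring)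
  have hR : ∀ s ∈ Ico 0 t, |R s| ≤ κ₃ / 2 * (σ * B * (1 + 2 * κ₂ * t)) ^ 2 := by
    intro s hs
    have hκ₃0 : 0 ≤ κ₃ := by simpa using (abs_nonneg _).trans (hκ₃ 1 0)
    refine (abs_sub_sub_mul_le_of_abs_deriv_sub_le hF (fun z => hκ₃ z (ψ s))).trans ?_
    rw [← sq_abs]
    gcongr
    exact hz s (Ico_subset_Icc_self hs)
  simpa using abs_le_mul_of_hasDerivWithinAt_neg_mul_sub
    ((by fun_prop : ContinuousOn ρ (Ici 0)).mono hIcc) hρ' (fun s _ => hF'nonneg _) hR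
    (by simp only [ρ]; rw [hx 0 le_rfl, hy 0 le_rfl, hψ0]; simp) t ⟨ht, le_rfl⟩

theorem first_order_estimate_general
    (V ψ W x y : ℝ → ℝ) (x₀ ε δ : ℝ)
    (hV : ContDiff ℝ 3 V)
    (hδ : 0 < δ)
    (hconvex : ∀ z : ℝ, δ ≤ deriv (deriv V) z)
    (hbdd2 : BddAbove (Set.range fun z : ℝ => |deriv (deriv V) z|))
    (hbdd3 : BddAbove (Set.range fun z : ℝ => |deriv (deriv (deriv V)) z|))
    (hψ0 : ψ 0 = x₀)
    (hψ : ∀ t : ℝ, 0 ≤ t → HasDerivAt ψ (-(deriv V (ψ t))) t)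
    (hW : ContinuousOn W (Set.Ici 0))
    (hε : 0 < ε)
    (hycont : ContinuousOn y (Set.Ici 0))
    (hy : ∀ t : ℝ, 0 ≤ t →
      y t = -(∫ s in (0:ℝ)..t, deriv (deriv V) (ψ s) * y s) + W t)
    (hxcont : ContinuousOn x (Set.Ici 0))
    (hx : ∀ t : ℝ, 0 ≤ t →
      x t = x₀ - (∫ s in (0:ℝ)..t, deriv V (x s)) + Real.sqrt ε * W t) :
    ∀ t : ℝ, 0 ≤ t →
      |x t - ψ t - Real.sqrt ε * y t| ≤
        ε * (⨆ s : Set.Icc (0:ℝ) t, |W s|) ^ 2 *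
          (⨆ z : ℝ, |deriv (deriv (deriv V)) z|) *
          ((⨆ z : ℝ, |deriv (deriv V) z|) * t + 1) ^ 3 * t := by
  intro t ht
  have hV' : ContDiff ℝ 2 (deriv V) := hV.deriv'
  have hV'' : ContDiff ℝ 1 (deriv (deriv V)) := hV'.deriv'
  set κ₂ := ⨆ z : ℝ, |deriv (deriv V) z|
  set κ₃ := ⨆ z : ℝ, |deriv (deriv (deriv V)) z|
  set B := ⨆ s : Set.Icc (0:ℝ) t, |W s|
  have hκ₂0 : 0 ≤ κ₂ := (abs_nonneg _).trans (le_ciSup hbdd2 0)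
  have hκ₃0 : 0 ≤ κ₃ := (abs_nonneg _).trans (le_ciSup hbdd3 0)
  refine (first_order_estimate_of_drift (fun z => (hV'.differentiable two_ne_zero z).hasDerivAt)
    hV''.continuous (fun z => hδ.le.trans (hconvex z))
    (abs_sub_le_of_abs_deriv_le (hV'.differentiable two_ne_zero) (le_ciSup hbdd2))
    (abs_sub_le_of_abs_deriv_le (hV''.differentiable one_ne_zero) (le_ciSup hbdd3))
    (Real.sqrt_nonneg ε) hψ0 hψ hW
    (fun s hs => abs_le_iSup_abs_of_continuousOn (hW.mono Icc_subset_Ici_self) hs)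
    hycont hy hxcont hx ht).trans ?_
  calc κ₃ / 2 * (√ε * B * (1 + 2 * κ₂ * t)) ^ 2 * t
      = ε * B ^ 2 * κ₃ * ((1 + 2 * (κ₂ * t)) ^ 2 / 2) * t := by
        rw [mul_pow, mul_pow, Real.sq_sqrt hε.le]; ring
    _ ≤ ε * B ^ 2 * κ₃ * (κ₂ * t + 1) ^ 3 * t := by
        gcongr
        nlinarith [mul_nonneg hκ₂0 ht]

/-- first order estimate. For a smooth coercive regular potential `V`,
a fixed continuous path `W` with `W 0 = 0`, `B t := sup_{0 ≤ s ≤ t} |W s|`,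
`κ₂ := sup_z |V''(z)|`, `κ₃ := sup_z |V'''(z)|`, the solution `y` of
`y_t = -∫₀ᵗ V''(ψ_s) y_s ds + W_t`, the solution `x^ε` of
`x^ε_t = x₀ - ∫₀ᵗ V'(x^ε_s) ds + √ε W_t` and the gradient flow `ψ` started at `x₀`
satisfy `|x^ε_t - ψ_t - √ε y_t| ≤ ε B_t² κ₃ (κ₂ t + 1)³ t` for every `t ≥ 0`. -/
theorem first_order_estimate
    (V ψ W x y : ℝ → ℝ) (x₀ ε δ : ℝ)
    (hV : ContDiff ℝ 3 V)
    (hV0 : V 0 = 0)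
    (hcrit : ∀ z : ℝ, deriv V z = 0 ↔ z = 0)
    (hV''0 : 0 < deriv (deriv V) 0)
    (hcoercive : Tendsto V (Filter.cocompact ℝ) atTop)
    (hδ : 0 < δ)
    (hconvex : ∀ z : ℝ, δ ≤ deriv (deriv V) z)
    (hbdd2 : BddAbove (Set.range fun z : ℝ => |deriv (deriv V) z|))
    (hbdd3 : BddAbove (Set.range fun z : ℝ => |deriv (deriv (deriv V)) z|))
    (hx₀ : x₀ ≠ 0)
    (hψ0 : ψ 0 = x₀)
    (hψ : ∀ t : ℝ, 0 ≤ t → HasDerivAt ψ (-(deriv V (ψ t))) t)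
    (hW : ContinuousOn W (Set.Ici 0))
    (hW0 : W 0 = 0)
    (hε : 0 < ε)
    (hycont : ContinuousOn y (Set.Ici 0))
    (hy : ∀ t : ℝ, 0 ≤ t →
      y t = -(∫ s in (0:ℝ)..t, deriv (deriv V) (ψ s) * y s) + W t)
    (hxcont : ContinuousOn x (Set.Ici 0))
    (hx : ∀ t : ℝ, 0 ≤ t →
      x t = x₀ - (∫ s in (0:ℝ)..t, deriv V (x s)) + Real.sqrt ε * W t) :
    ∀ t : ℝ, 0 ≤ t →
      |x t - ψ t - Real.sqrt ε * y t| ≤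
        ε * (⨆ s : Set.Icc (0:ℝ) t, |W s|) ^ 2 *
          (⨆ z : ℝ, |deriv (deriv (deriv V)) z|) *
          ((⨆ z : ℝ, |deriv (deriv V) z|) * t + 1) ^ 3 * t :=
  first_order_estimate_general V ψ W x y x₀ ε δ hV hδ hconvex hbdd2 hbdd3 hψ0 hψ hW hε hycont hy
    hxcont hx
end

section
/- Let V be a coercive regular potential. For ε > 0 let μ^ε be the probability measure on ℝ with density e^{−(2/ε)V(x)}/M^ε with respect to Lebesgue measure, where M^ε = ∫_ℝ e^{−(2/ε)V(z)} dz, and let 𝒩^ε be the Normal distribution with mean 0 and variance ε/(2V''(0)). Then lim_{ε→0} ‖μ^ε − 𝒩^ε‖ = 0, where ‖·‖ denotes the total variation distance. -/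
/-!
After the substitution `x = √ε y` the Gaussian `N(0, ε/(2a))`, `a = V''(0)`, has the fixed
density `e^{-a y²}/√(π/a)`, and the Gibbs measure has the density proportional to
`e^{-(2/ε) V(√ε y)}`. By L'Hôpital `V(x)/x² → a/2`, so this exponent tends to `a y²`, while
`V'' ≥ δ` gives `V(x) ≥ δ x²/2` and hence the integrable majorant `e^{-δ y²}`. Dominated
convergence then yields `L¹` convergence of the rescaled densities, and the total variation
distance is bounded by the `L¹` distance of the densities, which the substitution preserves.
-/

open Filter MeasureTheory ProbabilityTheory

open Set Topology

theorem tvDist_nonneg (P Q : Measure ℝ) : 0 ≤ tvDist P Q :=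
  Real.iSup_nonneg fun _ ↦ abs_nonneg _

theorem quadratic_le_of_le_deriv_deriv {f : ℝ → ℝ} {c : ℝ} (hf : Differentiable ℝ f)
    (hf' : Differentiable ℝ (deriv f)) (hc : ∀ x, c ≤ deriv (deriv f) x) (x₀ x : ℝ) :
    f x₀ + deriv f x₀ * (x - x₀) + c / 2 * (x - x₀) ^ 2 ≤ f x := by
  set h : ℝ → ℝ := fun x ↦ f x - deriv f x₀ * (x - x₀) - c / 2 * (x - x₀) ^ 2
  set h' : ℝ → ℝ := fun x ↦ deriv f x - deriv f x₀ - c * (x - x₀)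
  have hh : ∀ x, HasDerivAt h (h' x) x := fun x ↦ by
    have hid : HasDerivAt (fun y ↦ y - x₀) 1 x := (hasDerivAt_id' x).sub_const x₀
    exact (((hf x).hasDerivAt.sub (hid.const_mul (deriv f x₀))).sub
      ((hid.pow 2).const_mul (c / 2))).congr_deriv (by ring)
  have hh' : ∀ x, HasDerivAt h' (deriv (deriv f) x - c) x := fun x ↦
    (((hf' x).hasDerivAt.sub_const (deriv f x₀)).sub
      (((hasDerivAt_id' x).sub_const x₀).const_mul c)).congr_deriv (by ring)
  have hmono : Monotone (deriv h) := by
    rw [funext fun x ↦ (hh x).deriv]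
    exact monotone_of_deriv_nonneg (fun x ↦ (hh' x).differentiableAt)
      fun x ↦ by rw [(hh' x).deriv]; linarith [hc x]
  have hmin : IsMinOn h univ x₀ :=
    (hmono.convexOn_univ_of_deriv fun x ↦ (hh x).differentiableAt).isMinOn_of_rightDeriv_eq_zero
      (by simp) (by simpa [h'] using ((hh x₀).hasDerivWithinAt.derivWithin
        (uniqueDiffWithinAt_Ioi x₀)))
  have := hmin (mem_univ x)
  simp only [h, mem_ofPred_eq, sub_self, mul_zero, sub_zero, ne_eq, OfNat.ofNat_ne_zero,
    not_false_eq_true, zero_pow] at this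
  linarith

theorem tendsto_div_sq_nhdsNE_zero {f : ℝ → ℝ} {a : ℝ} (hf : Differentiable ℝ f) (h0 : f 0 = 0)
    (h0' : deriv f 0 = 0) (ha : HasDerivAt (deriv f) a 0) :
    Tendsto (fun x ↦ f x / x ^ 2) (𝓝[≠] 0) (𝓝 (a / 2)) := by
  have hslope : Tendsto (fun x ↦ deriv f x / (2 * x)) (𝓝[≠] 0) (𝓝 (a / 2)) := by
    refine ((hasDerivAt_iff_tendsto_slope.mp ha).div_const 2).congr fun x ↦ ?_
    simp only [slope_def_field, h0', sub_zero]
    rw [div_div, mul_comm]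
  refine HasDerivAt.lhopital_zero_nhdsNE (.of_forall fun x ↦ (hf x).hasDerivAt)
    (.of_forall fun x ↦ by simpa using hasDerivAt_pow 2 x)
    (eventually_nhdsWithin_of_forall fun x hx ↦ mul_ne_zero two_ne_zero hx) ?_ ?_ hslope
  · exact tendsto_nhdsWithin_of_tendsto_nhds (by simpa [h0] using hf.continuous.tendsto 0)
  · exact tendsto_nhdsWithin_of_tendsto_nhds (by simpa using (continuous_pow 2).tendsto (0 : ℝ))

theorem tendsto_integral_norm_sub_of_dominated {α E ι : Type*} [MeasurableSpace α]
    {μ : Measure α} [NormedAddCommGroup E] {l : Filter ι} [l.IsCountablyGenerated]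
    {F : ι → α → E} {f : α → E} {bound : α → ℝ}
    (hF_meas : ∀ᶠ i in l, AEStronglyMeasurable (F i) μ) (hf : Integrable f μ)
    (h_bound : ∀ᶠ i in l, ∀ᵐ x ∂μ, ‖F i x‖ ≤ bound x) (bound_integrable : Integrable bound μ)
    (h_lim : ∀ᵐ x ∂μ, Tendsto (fun i ↦ F i x) l (𝓝 (f x))) :
    Tendsto (fun i ↦ ∫ x, ‖F i x - f x‖ ∂μ) l (𝓝 0) := by
  have := tendsto_integral_filter_of_dominated_convergence (f := fun _ ↦ (0 : ℝ))
    (fun x ↦ bound x + ‖f x‖)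
    (hF_meas.mono fun i h ↦ (h.sub hf.1).norm)
    (h_bound.mono fun i h ↦ h.mono fun x hx ↦ by
      simpa using (norm_sub_le _ _).trans (add_le_add_left hx _))
    (bound_integrable.add hf.norm)
    (h_lim.mono fun x hx ↦ by simpa using (hx.sub_const (f x)).norm)
  rwa [integral_zero] at this

theorem tvDist_withDensity_le_integral_abs_sub {μ : Measure ℝ} {f g : ℝ → ℝ}
    (hf : Integrable f μ) (hg : Integrable g μ) (hf0 : 0 ≤ f) (hg0 : 0 ≤ g) :
    tvDist (μ.withDensity fun x ↦ ENNReal.ofReal (f x))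
      (μ.withDensity fun x ↦ ENNReal.ofReal (g x)) ≤ ∫ x, |f x - g x| ∂μ := by
  refine Real.iSup_le (fun ⟨A, hA⟩ ↦ ?_) (integral_nonneg fun x ↦ abs_nonneg _)
  have hmeasure : ∀ {k : ℝ → ℝ}, Integrable k μ → 0 ≤ k →
      ((μ.withDensity fun x ↦ ENNReal.ofReal (k x)) A).toReal = ∫ x in A, k x ∂μ :=
    fun hk hk0 ↦ by
      rw [withDensity_apply _ hA, integral_eq_lintegral_of_nonneg_ae (.of_forall hk0)
        hk.1.restrict]
  rw [hmeasure hf hf0, hmeasure hg hg0, ← integral_sub hf.integrableOn hg.integrableOn]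
  calc |∫ x in A, f x - g x ∂μ| ≤ ∫ x in A, |f x - g x| ∂μ := abs_integral_le_integral_abs
    _ ≤ ∫ x, |f x - g x| ∂μ :=
      setIntegral_le_integral (hf.sub hg).abs (.of_forall fun x ↦ abs_nonneg _)

open Real in
theorem sqrt_mul_gaussianPDFReal_sqrt_mul {a ε : ℝ} (ha : 0 < a) (hε : 0 < ε) (y : ℝ) :
    √ε * gaussianPDFReal 0 (ε / (2 * a)).toNNReal (√ε * y) = exp (-a * y ^ 2) / √(π / a) := by
  have hv : ((ε / (2 * a)).toNNReal : ℝ) = ε / (2 * a) := Real.coe_toNNReal _ (by positivity)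
  have hvar : 2 * π * (ε / (2 * a)) = ε * (π / a) := by field_simp
  have hexp : -(√ε * y - 0) ^ 2 / (2 * (ε / (2 * a))) = -a * y ^ 2 := by
    rw [sub_zero, mul_pow, sq_sqrt hε.le]
    field_simp
  have hs : √ε ≠ 0 := (sqrt_pos.2 hε).ne'
  rw [gaussianPDFReal, hv, hexp, hvar, sqrt_mul hε.le]
  field_simp

theorem integral_eq_mul_integral_comp_mul {E : Type*} [NormedAddCommGroup E] [NormedSpace ℝ E]
    {c : ℝ} (hc : 0 < c) (g : ℝ → E) : ∫ x, g x = c • ∫ y, g (c * y) := by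
  rw [Measure.integral_comp_mul_left, abs_inv, abs_of_pos hc, smul_inv_smul₀ hc.ne']

section GibbsMeasure

noncomputable def gibbsWeight (V : ℝ → ℝ) (ε x : ℝ) : ℝ := Real.exp (-(2 / ε) * V x)

variable {V : ℝ → ℝ} {a δ ε : ℝ}

theorem gibbsWeight_pos (x : ℝ) : 0 < gibbsWeight V ε x := Real.exp_pos _

theorem continuous_gibbsWeight (hV : Continuous V) : Continuous (gibbsWeight V ε) := by
  unfold gibbsWeight
  fun_prop

theorem gibbsWeight_le_exp (hlow : ∀ x, δ / 2 * x ^ 2 ≤ V x) (hε : 0 < ε) (x : ℝ) :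
    gibbsWeight V ε x ≤ Real.exp (-(δ / ε) * x ^ 2) := by
  refine Real.exp_le_exp.2 ?_
  calc -(2 / ε) * V x ≤ -(2 / ε) * (δ / 2 * x ^ 2) :=
        mul_le_mul_of_nonpos_left (hlow x) (neg_nonpos.2 (by positivity))
    _ = -(δ / ε) * x ^ 2 := by ring

theorem gibbsWeight_sqrt_mul_le (hlow : ∀ x, δ / 2 * x ^ 2 ≤ V x) (hε : 0 < ε) (y : ℝ) :
    gibbsWeight V ε (√ε * y) ≤ Real.exp (-δ * y ^ 2) := by
  convert gibbsWeight_le_exp hlow hε (√ε * y) using 2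
  rw [mul_pow, Real.sq_sqrt hε.le]
  field_simp

theorem integrable_gibbsWeight (hV : Continuous V) (hlow : ∀ x, δ / 2 * x ^ 2 ≤ V x)
    (hδ : 0 < δ) (hε : 0 < ε) : Integrable (gibbsWeight V ε) :=
  (integrable_exp_neg_mul_sq (div_pos hδ hε)).mono'
    (continuous_gibbsWeight hV).aestronglyMeasurable
    (.of_forall fun x ↦ by
      rw [Real.norm_of_nonneg (gibbsWeight_pos x).le]
      exact gibbsWeight_le_exp hlow hε x)

theorem tendsto_gibbsWeight_sqrt_mul (hV0 : V 0 = 0)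
    (hlim : Tendsto (fun x ↦ V x / x ^ 2) (𝓝[≠] 0) (𝓝 (a / 2))) (y : ℝ) :
    Tendsto (fun ε ↦ gibbsWeight V ε (√ε * y)) (𝓝[>] 0) (𝓝 (Real.exp (-a * y ^ 2))) := by
  suffices Tendsto (fun ε ↦ 2 / ε * V (√ε * y)) (𝓝[>] 0) (𝓝 (a * y ^ 2)) by
    simpa only [gibbsWeight, neg_mul, Function.comp_def] using
      (Real.continuous_exp.tendsto _).comp this.neg
  rcases eq_or_ne y 0 with rfl | hy
  · simp [hV0]
  have hscale : Tendsto (fun ε ↦ √ε * y) (𝓝[>] 0) (𝓝[≠] 0) := by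
    refine tendsto_nhdsWithin_iff.2 ⟨?_, eventually_nhdsWithin_of_forall fun ε hε ↦
      mul_ne_zero (Real.sqrt_pos.2 hε).ne' hy⟩
    exact tendsto_nhdsWithin_of_tendsto_nhds
      (by simpa using (Real.continuous_sqrt.tendsto 0).mul_const y)
  have hlim' := (hlim.comp hscale).const_mul (2 * y ^ 2)
  rw [show 2 * y ^ 2 * (a / 2) = a * y ^ 2 by ring] at hlim'
  refine hlim'.congr' (eventually_nhdsWithin_of_forall fun ε (hε : 0 < ε) ↦ ?_)
  simp only [Function.comp_apply, mul_pow, Real.sq_sqrt hε.le]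
  field_simp

theorem tendsto_integral_gibbsWeight_sqrt_mul (hV : Continuous V) (hV0 : V 0 = 0)
    (hlow : ∀ x, δ / 2 * x ^ 2 ≤ V x) (hlim : Tendsto (fun x ↦ V x / x ^ 2) (𝓝[≠] 0) (𝓝 (a / 2)))
    (hδ : 0 < δ) :
    Tendsto (fun ε ↦ ∫ y, gibbsWeight V ε (√ε * y)) (𝓝[>] 0) (𝓝 √(Real.pi / a)) := by
  rw [← integral_gaussian a]
  exact tendsto_integral_filter_of_dominated_convergence (fun y ↦ Real.exp (-δ * y ^ 2))
    (.of_forall fun ε ↦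
      ((continuous_gibbsWeight hV).comp (continuous_const_mul _)).aestronglyMeasurable)
    (eventually_nhdsWithin_of_forall fun ε hε ↦ .of_forall fun y ↦ by
      rw [Real.norm_of_nonneg (gibbsWeight_pos _).le]
      exact gibbsWeight_sqrt_mul_le hlow hε y)
    (integrable_exp_neg_mul_sq hδ) (.of_forall (tendsto_gibbsWeight_sqrt_mul hV0 hlim))

noncomputable def rescaledGibbsDensity (V : ℝ → ℝ) (ε y : ℝ) : ℝ :=
  gibbsWeight V ε (√ε * y) / ∫ z, gibbsWeight V ε (√ε * z)

theorem continuous_rescaledGibbsDensity (hV : Continuous V) :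
    Continuous (rescaledGibbsDensity V ε) :=
  ((continuous_gibbsWeight hV).comp (continuous_const_mul _)).div_const _

theorem norm_rescaledGibbsDensity_le (hlow : ∀ x, δ / 2 * x ^ 2 ≤ V x) (hε : 0 < ε) {C : ℝ}
    (hC : (∫ z, gibbsWeight V ε (√ε * z))⁻¹ ≤ C) (y : ℝ) :
    ‖rescaledGibbsDensity V ε y‖ ≤ C * Real.exp (-δ * y ^ 2) := by
  have hJ : 0 ≤ ∫ z, gibbsWeight V ε (√ε * z) := integral_nonneg fun z ↦ (gibbsWeight_pos _).le
  rw [rescaledGibbsDensity, Real.norm_of_nonneg (div_nonneg (gibbsWeight_pos _).le hJ),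
    div_eq_inv_mul]
  exact mul_le_mul hC (gibbsWeight_sqrt_mul_le hlow hε y) (gibbsWeight_pos _).le
    ((inv_nonneg.2 hJ).trans hC)

theorem tendsto_integral_abs_rescaledGibbsDensity_sub (hV : Continuous V) (hV0 : V 0 = 0)
    (hlow : ∀ x, δ / 2 * x ^ 2 ≤ V x) (hlim : Tendsto (fun x ↦ V x / x ^ 2) (𝓝[≠] 0) (𝓝 (a / 2)))
    (hδ : 0 < δ) (ha : 0 < a) :
    Tendsto (fun ε ↦ ∫ y, |rescaledGibbsDensity V ε y - Real.exp (-a * y ^ 2) / √(Real.pi / a)|)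
      (𝓝[>] 0) (𝓝 0) := by
  have hJ := tendsto_integral_gibbsWeight_sqrt_mul hV hV0 hlow hlim hδ
  have hJ0 : √(Real.pi / a) ≠ 0 := (Real.sqrt_pos.2 (div_pos Real.pi_pos ha)).ne'
  have hJinv : ∀ᶠ ε in 𝓝[>] 0,
      (∫ z, gibbsWeight V ε (√ε * z))⁻¹ ≤ (√(Real.pi / a))⁻¹ + 1 :=
    (hJ.inv₀ hJ0).eventually (eventually_le_nhds (lt_add_one _))
  simpa only [Real.norm_eq_abs] using tendsto_integral_norm_sub_of_dominated
    (.of_forall fun ε ↦ (continuous_rescaledGibbsDensity hV).aestronglyMeasurable)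
    ((integrable_exp_neg_mul_sq ha).div_const _)
    (by
      filter_upwards [hJinv, self_mem_nhdsWithin] with ε hJε hε
      exact .of_forall (norm_rescaledGibbsDensity_le hlow hε hJε))
    ((integrable_exp_neg_mul_sq hδ).const_mul _)
    (.of_forall fun y ↦ (tendsto_gibbsWeight_sqrt_mul hV0 hlim y).div hJ hJ0)

theorem tvDist_gibbs_gaussian_le (hV : Continuous V) (hlow : ∀ x, δ / 2 * x ^ 2 ≤ V x)
    (hδ : 0 < δ) (ha : 0 < a) (hε : 0 < ε) :
    tvDist (volume.withDensity fun x ↦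
        ENNReal.ofReal (gibbsWeight V ε x / ∫ z, gibbsWeight V ε z))
      (gaussianReal 0 (ε / (2 * a)).toNNReal) ≤
    ∫ y, |rescaledGibbsDensity V ε y - Real.exp (-a * y ^ 2) / √(Real.pi / a)| := by
  have hs : 0 < √ε := Real.sqrt_pos.2 hε
  have hv : (ε / (2 * a)).toNNReal ≠ 0 := by simpa using div_pos hε (mul_pos two_pos ha)
  rw [gaussianReal_of_var_ne_zero 0 hv]
  refine (tvDist_withDensity_le_integral_abs_sub
    ((integrable_gibbsWeight hV hlow hδ hε).div_const _) (integrable_gaussianPDFReal 0 _)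
    (fun x ↦ div_nonneg (gibbsWeight_pos x).le (integral_nonneg fun z ↦ (gibbsWeight_pos z).le))
    (gaussianPDFReal_nonneg 0 _)).trans_eq ?_
  rw [integral_eq_mul_integral_comp_mul hs, smul_eq_mul, ← integral_const_mul,
    integral_eq_mul_integral_comp_mul hs (gibbsWeight V ε), smul_eq_mul]
  have hmul_abs : ∀ t, √ε * |t| = |√ε * t| := fun t ↦ by rw [abs_mul, abs_of_pos hs]
  refine integral_congr_ae (.of_forall fun y ↦ ?_)
  dsimp only
  rw [hmul_abs, mul_sub, sqrt_mul_gaussianPDFReal_sqrt_mul ha hε,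
    ← mul_div_assoc, mul_div_mul_left _ _ hs.ne', rescaledGibbsDensity]

end GibbsMeasure

theorem gibbs_measure_tendsto_gaussian_general
    (V : ℝ → ℝ) (δ : ℝ)
    (hV : ContDiff ℝ 3 V)
    (hV0 : V 0 = 0)
    (hcrit : ∀ x : ℝ, deriv V x = 0 ↔ x = 0)
    (hV''0 : 0 < deriv (deriv V) 0)
    (hδ : 0 < δ)
    (hconvex : ∀ x : ℝ, δ ≤ deriv (deriv V) x) :
    Tendsto
      (fun ε : ℝ =>
        tvDist
          (volume.withDensity fun x : ℝ =>
            ENNReal.ofReal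
              (Real.exp (-(2 / ε) * V x) / ∫ z : ℝ, Real.exp (-(2 / ε) * V z)))
          (gaussianReal 0 (ε / (2 * deriv (deriv V) 0)).toNNReal))
      (nhdsWithin 0 (Set.Ioi 0)) (nhds 0) := by
  have hV1 : Differentiable ℝ V := hV.differentiable (by norm_num)
  have hV2 : Differentiable ℝ (deriv V) :=
    (hV.iterate_deriv' 2 1).differentiable (by norm_num)
  have hV'0 : deriv V 0 = 0 := (hcrit 0).2 rfl
  have hlow : ∀ x, δ / 2 * x ^ 2 ≤ V x := fun x ↦ by
    simpa [hV0, hV'0, div_mul_eq_mul_div] using quadratic_le_of_le_deriv_deriv hV1 hV2 hconvex 0 x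
  have hlim := tendsto_div_sq_nhdsNE_zero hV1 hV0 hV'0 (hV2 0).hasDerivAt
  refine squeeze_zero' (.of_forall fun ε ↦ tvDist_nonneg _ _)
    (eventually_nhdsWithin_of_forall fun ε hε ↦
      tvDist_gibbs_gaussian_le hV1.continuous hlow hδ hV''0 hε) ?_
  exact tendsto_integral_abs_rescaledGibbsDensity_sub hV1.continuous hV0 hlow hlim hδ hV''0

/-- For a coercive regular potential `V`, the Gibbs measure
`μ^ε(dx) = e^{-(2/ε)V(x)} dx / M^ε` converges in total variation, as `ε → 0⁺`,
to the Gaussian `N(0, ε/(2V''(0)))`. -/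
theorem gibbs_measure_tendsto_gaussian
    (V : ℝ → ℝ) (δ : ℝ)
    (hV : ContDiff ℝ 3 V)
    (hV0 : V 0 = 0)
    (hcrit : ∀ x : ℝ, deriv V x = 0 ↔ x = 0)
    (hV''0 : 0 < deriv (deriv V) 0)
    (hcoercive : Tendsto V (Filter.cocompact ℝ) atTop)
    (hδ : 0 < δ)
    (hconvex : ∀ x : ℝ, δ ≤ deriv (deriv V) x) :
    Tendsto
      (fun ε : ℝ =>
        tvDist
          (volume.withDensity fun x : ℝ =>
            ENNReal.ofReal
              (Real.exp (-(2 / ε) * V x) / ∫ z : ℝ, Real.exp (-(2 / ε) * V z)))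
          (gaussianReal 0 (ε / (2 * deriv (deriv V) 0)).toNNReal))
      (nhdsWithin 0 (Set.Ioi 0)) (nhds 0) :=
  gibbs_measure_tendsto_gaussian_general V δ hV hV0 hcrit hV''0 hδ hconvex
end

section
/- Let V be a coercive regular potential, with δ > 0 such that V''(x) ≥ δ for all x ∈ ℝ. Then for every M ∈ (0, +∞) there exists a smooth coercive regular potential V_M such that V_M(x) = V(x) for every |x| ≤ √2 M; that is, there exists V_M : ℝ → ℝ of class C³ with V_M(0) = 0, V_M'' (x) ≥ δ for every x ∈ ℝ, sup_{x∈ℝ} |V_M''(x)| < +∞, sup_{x∈ℝ} |V_M'''(x)| < +∞, and V_M(x) = V(x) whenever |x| ≤ √2 M. -/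
open Filter Set Metric

/-!
Multiply `V'' - δ` by a bump function equal to `1` on a neighbourhood of `[-√2 M, √2 M]`:
the result `g = δ + φ (V'' - δ)` is `C¹`, at least `δ`, and `g - δ` has compact support.
Integrating `g` twice with the initial data `V 0`, `V' 0` gives `V_M`, which agrees with `V`
where `g = V''` because both solve the same second-order initial value problem there; `V_M'' - δ`
and `V_M'''` have compact support, so `V_M''` and `V_M'''` are bounded.
-/

lemma bddAbove_range_abs_of_hasCompactSupport_sub {α : Type*} [TopologicalSpace α] {F : α → ℝ}
    (hF : Continuous F) (c : ℝ) (h : HasCompactSupport fun x => F x - c) :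
    BddAbove (range fun x => |F x|) := by
  obtain ⟨C, hC⟩ := (hF.sub continuous_const).bounded_above_of_compact_support h
  refine ⟨C + |c|, forall_mem_range.mpr fun x => ?_⟩
  calc |F x| = |(F x - c) + c| := by rw [sub_add_cancel]
    _ ≤ |F x - c| + |c| := abs_add_le _ _
    _ ≤ C + |c| := by gcongr; exact hC x

lemma exists_contDiff_eqOn_ball_hasCompactSupport_sub {E : Type*} [NormedAddCommGroup E]
    [NormedSpace ℝ E] [FiniteDimensional ℝ E] {n : ℕ∞} {W : E → ℝ} (hW : ContDiff ℝ n W)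
    {δ : ℝ} (hWδ : ∀ x, δ ≤ W x) (c : E) (R : ℝ) :
    ∃ g : E → ℝ, ContDiff ℝ n g ∧ (∀ x, δ ≤ g x) ∧ EqOn g W (ball c R) ∧
      HasCompactSupport fun x => g x - δ := by
  let φ : ContDiffBump c := ⟨|R| + 1, |R| + 2, by positivity, by linarith⟩
  refine ⟨fun x => δ + φ x * (W x - δ),
    contDiff_const.add (φ.contDiff.mul (hW.sub contDiff_const)),
    fun x => le_add_of_nonneg_right (mul_nonneg φ.nonneg (sub_nonneg.mpr (hWδ x))),
    fun x hx => ?_, ?_⟩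
  · have hRφ : R ≤ φ.rIn := by linarith [le_abs_self R, show φ.rIn = |R| + 1 from rfl]
    have hxφ : x ∈ closedBall c φ.rIn :=
      ball_subset_closedBall.trans (closedBall_subset_closedBall hRφ) hx
    simp [φ.one_of_mem_closedBall hxφ]
  · simp only [add_sub_cancel_left]
    exact φ.hasCompactSupport.mul_right

section Primitive

variable {E : Type*} [NormedAddCommGroup E] [NormedSpace ℝ E] [CompleteSpace E] {n : ℕ∞}
  {g : ℝ → E}

lemma exists_contDiff_deriv_eq (hg : ContDiff ℝ n g) (x₀ : ℝ) (a : E) :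
    ∃ F : ℝ → E, ContDiff ℝ (n + 1) F ∧ deriv F = g ∧ F x₀ = a := by
  have hF : ∀ x, HasDerivAt (fun x => a + ∫ t in x₀..x, g t) (g x) x := fun x =>
    ((hg.continuous.integral_hasStrictDerivAt x₀ x).hasDerivAt).const_add a
  have hderiv : deriv (fun x => a + ∫ t in x₀..x, g t) = g := funext fun x => (hF x).deriv
  refine ⟨_, contDiff_succ_iff_deriv.mpr ⟨fun x => (hF x).differentiableAt, by simp, ?_⟩,
    hderiv, by simp⟩
  rwa [hderiv]

lemma exists_contDiff_deriv_deriv_eq (hg : ContDiff ℝ n g) (x₀ : ℝ) (a b : E) :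
    ∃ F : ℝ → E, ContDiff ℝ (n + 2) F ∧ deriv (deriv F) = g ∧ F x₀ = a ∧ deriv F x₀ = b := by
  obtain ⟨G, hG, hG', hGx₀⟩ := exists_contDiff_deriv_eq hg x₀ b
  obtain ⟨F, hF, hF', hFx₀⟩ := exists_contDiff_deriv_eq (n := n + 1) hG x₀ a
  refine ⟨F, ?_, by rw [hF', hG'], hFx₀, by rw [hF', hGx₀]⟩
  convert hF using 1
  push_cast
  ring

end Primitive

lemma IsOpen.eqOn_of_deriv_deriv_eq {𝕜 G : Type*} [RCLike 𝕜] [NormedAddCommGroup G]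
    [NormedSpace 𝕜 G] {f g : 𝕜 → G} {s : Set 𝕜} {x : 𝕜} (hs : IsOpen s) (hs' : IsPreconnected s)
    (hf : DifferentiableOn 𝕜 f s) (hg : DifferentiableOn 𝕜 g s)
    (hf' : DifferentiableOn 𝕜 (deriv f) s) (hg' : DifferentiableOn 𝕜 (deriv g) s)
    (h'' : EqOn (deriv (deriv f)) (deriv (deriv g)) s) (hx : x ∈ s) (h₀ : f x = g x)
    (h₁ : deriv f x = deriv g x) : EqOn f g s :=
  hs.eqOn_of_deriv_eq hs' hf hg (hs.eqOn_of_deriv_eq hs' hf' hg' h'' hx h₁) hx h₀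

theorem exists_smooth_coercive_approximation_general
    (V : ℝ → ℝ) (δ : ℝ)
    (hV : ContDiff ℝ 3 V)
    (hV0 : V 0 = 0)
    (hconvex : ∀ x : ℝ, δ ≤ deriv (deriv V) x) :
    ∀ M : ℝ, 0 < M →
      ∃ VM : ℝ → ℝ,
        ContDiff ℝ 3 VM ∧
        VM 0 = 0 ∧
        (∀ x : ℝ, δ ≤ deriv (deriv VM) x) ∧
        BddAbove (Set.range fun x : ℝ => |deriv (deriv VM) x|) ∧
        BddAbove (Set.range fun x : ℝ => |deriv (deriv (deriv VM)) x|) ∧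
        (∀ x : ℝ, |x| ≤ Real.sqrt 2 * M → VM x = V x) := by
  intro M hM
  set R := Real.sqrt 2 * M + 1
  have hV'' : ContDiff ℝ 1 (deriv (deriv V)) := hV.deriv'.deriv'
  obtain ⟨g, hg, hgδ, hgV, hg_supp⟩ :=
    exists_contDiff_eqOn_ball_hasCompactSupport_sub hV'' hconvex 0 R
  obtain ⟨VM, hVM, hVM'', hVM0, hVM'0⟩ := exists_contDiff_deriv_deriv_eq hg 0 (V 0) (deriv V 0)
  have hVM3 : ContDiff ℝ 3 VM := hVM
  have hagree : EqOn VM V (ball 0 R) :=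
    isOpen_ball.eqOn_of_deriv_deriv_eq (convex_ball 0 R).isPreconnected
      (hVM3.differentiable (by simp)).differentiableOn
      (hV.differentiable (by simp)).differentiableOn
      (hVM3.deriv'.differentiable (n := 2) (by simp)).differentiableOn
      (hV.deriv'.differentiable (n := 2) (by simp)).differentiableOn
      (hVM'' ▸ hgV) (mem_ball_self (by positivity)) hVM0 hVM'0
  have hmem : ∀ x : ℝ, |x| ≤ Real.sqrt 2 * M → x ∈ ball 0 R := fun x hx => by
    rw [mem_ball_zero_iff, Real.norm_eq_abs]; linarith
  have hderiv : deriv g = deriv fun x => g x - δ := funext fun x => (deriv_sub_const δ).symm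
  refine ⟨VM, hVM3, (hagree (hmem 0 (by rw [abs_zero]; positivity))).trans hV0, hVM'' ▸ hgδ,
    hVM'' ▸ bddAbove_range_abs_of_hasCompactSupport_sub hg.continuous δ hg_supp,
    hVM'' ▸ bddAbove_range_abs_of_hasCompactSupport_sub (hg.continuous_deriv le_rfl) 0 ?_,
    fun x hx => hagree (hmem x hx)⟩
  simpa only [sub_zero, hderiv] using hg_supp.deriv

/-- A coercive regular potential `V` (with `V'' ≥ δ > 0`) can be
modified outside `[-√2 M, √2 M]` to a smooth coercive regular potential `V_M`:
`V_M` is C³, `V_M 0 = 0`, `V_M'' ≥ δ` everywhere, `V_M''` and `V_M'''` are bounded,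
and `V_M = V` on `{x : |x| ≤ √2 M}`. -/
theorem exists_smooth_coercive_approximation
    (V : ℝ → ℝ) (δ : ℝ)
    (hV : ContDiff ℝ 3 V)
    (hV0 : V 0 = 0)
    (hcrit : ∀ x : ℝ, deriv V x = 0 ↔ x = 0)
    (hV''0 : 0 < deriv (deriv V) 0)
    (hcoercive : Tendsto V (Filter.cocompact ℝ) atTop)
    (hδ : 0 < δ)
    (hconvex : ∀ x : ℝ, δ ≤ deriv (deriv V) x) :
    ∀ M : ℝ, 0 < M →
      ∃ VM : ℝ → ℝ,
        ContDiff ℝ 3 VM ∧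
        VM 0 = 0 ∧
        (∀ x : ℝ, δ ≤ deriv (deriv VM) x) ∧
        BddAbove (Set.range fun x : ℝ => |deriv (deriv VM) x|) ∧
        BddAbove (Set.range fun x : ℝ => |deriv (deriv (deriv VM)) x|) ∧
        (∀ x : ℝ, |x| ≤ Real.sqrt 2 * M → VM x = V x) :=
  exists_smooth_coercive_approximation_general V δ hV hV0 hconvex
end
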